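/- arXiv:2102.10672 — 11 statements merged into one kernel-verified Lean document; each statement's English description precedes it below -/
import Mathlib

section
/- For every integer n ≥ 1 and every x ∈ [0,1], the two expressions for the winning probability of the x-strategy agree: Σ_{k=0}^{n-1} C(n,k) x^k (1-x)^{n-k} s(k+1,n) = 1 - x - Σ_{k=2}^{n} (1-x)^k/(k(k-1)). -/
open Finset Real

/-- `h(d,n) = Σ_{j=d}^{n} 1/(j-1)` -/
noncomputable def hfun (d n : ℕ) : ℝ := ∑ j ∈ Finset.Icc d n, 1 / ((j : ℝ) - 1)

/-- `s(1,n) = 1/n` and `s(d,n) = ((d-1)/n)·h(d,n)` for `d ≥ 2`. -/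
noncomputable def sfun (d n : ℕ) : ℝ :=
  if d = 1 then 1 / (n : ℝ) else ((d : ℝ) - 1) / (n : ℝ) * hfun d n

/-!
Write `n = m + 1` and `y = 1 - x`. Since `C(m+1, i+1) (i+1)/(m+1) = C(m, i)` and
`h(i+2, m+1) = H_m - H_i`, the left-hand side is `y^(m+1)/(m+1) + x E[H_m - H_J]` with
`J ~ Bin(m, x)`. Pascal's rule gives `E[H_J] = Σ_{k=1}^m (1 - y^k)/k`, so
`E[H_m - H_J] = Σ_{k=1}^m y^k/k`, and the identity reduces to a telescoping sum, via
`1/(k(k-1)) = 1/(k-1) - 1/k`.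
-/

lemma harmonic_sub_harmonic {i m : ℕ} (h : i ≤ m) :
    (harmonic m : ℝ) - harmonic i = ∑ j ∈ Ico i m, 1 / ((j : ℝ) + 1) := by
  rw [sum_Ico_eq_sub _ h]
  simp [harmonic]

lemma hfun_add_two {i m : ℕ} (h : i ≤ m) : hfun (i + 2) (m + 1) = harmonic m - harmonic i := by
  rw [harmonic_sub_harmonic h, hfun, ← Ico_add_one_right_eq_Icc,
    show m + 1 + 1 = m + 2 from rfl, ← sum_Ico_add' _ i m 2]
  push_cast
  ring_nf

lemma sfun_succ_self (n : ℕ) : sfun (n + 1) n = 0 := by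
  simp [sfun, hfun]

lemma choose_succ_mul_sfun {i m : ℕ} (h : i ≤ m) :
    ((m + 1).choose (i + 1) : ℝ) * sfun (i + 2) (m + 1)
      = m.choose i * (harmonic m - harmonic i) := by
  have hchoose : ((m + 1).choose (i + 1) : ℝ) * (i + 1) = (m + 1) * m.choose i := by
    exact_mod_cast (Nat.add_one_mul_choose_eq m i).symm
  rw [sfun, if_neg (by omega), hfun_add_two h]
  push_cast
  field_simp
  linear_combination (harmonic m - harmonic i : ℝ) * hchoose

lemma sum_choose_mul_pow_one_sub (m : ℕ) (x : ℝ) :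
    ∑ j ∈ range (m + 1), (m.choose j : ℝ) * x ^ j * (1 - x) ^ (m - j) = 1 := by
  have h := add_pow x (1 - x) m
  rw [add_sub_cancel, one_pow] at h
  exact (sum_congr rfl fun _ _ => by ring).trans h.symm

lemma sum_choose_mul_pow_div_succ (m : ℕ) (x y : ℝ) :
    ∑ i ∈ range (m + 1), (m.choose i : ℝ) * x ^ (i + 1) * y ^ (m - i) / (i + 1)
      = ((x + y) ^ (m + 1) - y ^ (m + 1)) / (m + 1) := by
  rw [eq_div_iff (by positivity), sum_mul, add_pow, sum_range_succ' _ (m + 1)]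
  simp only [Nat.choose_zero_right, pow_zero, Nat.cast_one, mul_one, one_mul, Nat.sub_zero,
    add_sub_cancel_right]
  refine sum_congr rfl fun i _ => ?_
  have hchoose : ((m + 1).choose (i + 1) : ℝ) * (i + 1) = (m + 1) * m.choose i := by
    exact_mod_cast (Nat.add_one_mul_choose_eq m i).symm
  rw [Nat.add_sub_add_right]
  field_simp
  linear_combination -x ^ (i + 1) * y ^ (m - i) * hchoose

lemma sum_choose_mul_pow_mul_harmonic (m : ℕ) (x : ℝ) :
    ∑ j ∈ range (m + 1), (m.choose j : ℝ) * (x ^ j * (1 - x) ^ (m - j) * harmonic j)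
      = ∑ k ∈ range m, (1 - (1 - x) ^ (k + 1)) / (k + 1) := by
  induction m with
  | zero => simp
  | succ m ih =>
    have hsplit := sum_choose_succ_mul (fun i k => x ^ i * (1 - x) ^ k * (harmonic i : ℝ)) m
    have hfirst :
        ∑ i ∈ range (m + 1), (m.choose i : ℝ) * (x ^ i * (1 - x) ^ (m + 1 - i) * harmonic i)
          = (1 - x) * ∑ j ∈ range (m + 1),
              (m.choose j : ℝ) * (x ^ j * (1 - x) ^ (m - j) * harmonic j) := by
      rw [mul_sum]
      refine sum_congr rfl fun i hi => ?_
      rw [Nat.sub_add_comm (Nat.lt_succ_iff.mp (mem_range.mp hi)), pow_succ]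
      ring
    have hsecond :
        ∑ i ∈ range (m + 1),
            (m.choose i : ℝ) * (x ^ (i + 1) * (1 - x) ^ (m - i) * harmonic (i + 1))
          = x * ∑ j ∈ range (m + 1),
              (m.choose j : ℝ) * (x ^ j * (1 - x) ^ (m - j) * harmonic j)
            + ∑ i ∈ range (m + 1),
                (m.choose i : ℝ) * x ^ (i + 1) * (1 - x) ^ (m - i) / (i + 1) := by
      rw [mul_sum, ← sum_add_distrib]
      refine sum_congr rfl fun i _ => ?_
      rw [harmonic_succ]
      push_cast
      ring
    rw [hsplit, hfirst, hsecond, sum_choose_mul_pow_div_succ, ih, sum_range_succ _ m]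
    ring

lemma sum_choose_mul_pow_mul_harmonic_sub (m : ℕ) (x : ℝ) :
    ∑ j ∈ range (m + 1),
        (m.choose j : ℝ) * (x ^ j * (1 - x) ^ (m - j) * (harmonic m - harmonic j))
      = ∑ k ∈ range m, (1 - x) ^ (k + 1) / (k + 1) := by
  have hexpand : ∑ j ∈ range (m + 1),
        (m.choose j : ℝ) * (x ^ j * (1 - x) ^ (m - j) * (harmonic m - harmonic j))
      = harmonic m * ∑ j ∈ range (m + 1), (m.choose j : ℝ) * x ^ j * (1 - x) ^ (m - j)
        - ∑ j ∈ range (m + 1),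
            (m.choose j : ℝ) * (x ^ j * (1 - x) ^ (m - j) * harmonic j) := by
    rw [mul_sum, ← sum_sub_distrib]
    exact sum_congr rfl fun _ _ => by ring
  rw [hexpand, sum_choose_mul_pow_one_sub, sum_choose_mul_pow_mul_harmonic, mul_one, harmonic,
    Rat.cast_sum, ← sum_sub_distrib]
  refine sum_congr rfl fun k _ => ?_
  push_cast
  ring

lemma pow_div_add_mul_sum_pow_div (m : ℕ) (x : ℝ) :
    (1 - x) ^ (m + 1) / (m + 1) + x * ∑ k ∈ range m, (1 - x) ^ (k + 1) / (k + 1)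
      = 1 - x - ∑ k ∈ Icc 2 (m + 1), (1 - x) ^ k / ((k : ℝ) * ((k : ℝ) - 1)) := by
  induction m with
  | zero => norm_num
  | succ m ih =>
    rw [sum_range_succ, sum_Icc_succ_top (by omega), ← sub_sub, ← ih]
    push_cast
    field_simp
    ring

theorem stmt0_general (n : ℕ) (hn : 1 ≤ n) (x : ℝ) :
    ∑ k ∈ Finset.range n, (n.choose k : ℝ) * x ^ k * (1 - x) ^ (n - k) * sfun (k + 1) n
      = 1 - x - ∑ k ∈ Finset.Icc 2 n, (1 - x) ^ k / ((k : ℝ) * ((k : ℝ) - 1)) := by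
  obtain ⟨m, rfl⟩ : ∃ m, n = m + 1 := ⟨n - 1, by omega⟩
  set f : ℕ → ℝ := fun k ↦
    ((m + 1).choose k : ℝ) * x ^ k * (1 - x) ^ (m + 1 - k) * sfun (k + 1) (m + 1)
  have hf_succ : ∀ i ∈ range (m + 1), f (i + 1)
      = x * ((m.choose i : ℝ) * (x ^ i * (1 - x) ^ (m - i) * (harmonic m - harmonic i))) := by
    intro i hi
    simp only [f, Nat.add_sub_add_right]
    linear_combination x ^ (i + 1) * (1 - x) ^ (m - i)
      * choose_succ_mul_sfun (Nat.lt_succ_iff.mp (mem_range.mp hi))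
  have hf_zero : f 0 = (1 - x) ^ (m + 1) / (m + 1) := by
    simp only [f, sfun, zero_add, if_pos, Nat.choose_zero_right, pow_zero, Nat.sub_zero]
    push_cast
    ring
  calc ∑ k ∈ range (m + 1), f k
      = ∑ k ∈ range (m + 2), f k := by
        rw [sum_range_succ _ (m + 1), left_eq_add]
        simp only [f, sfun_succ_self, mul_zero]
    _ = (1 - x) ^ (m + 1) / (m + 1) + x * ∑ k ∈ range m, (1 - x) ^ (k + 1) / (k + 1) := by
        rw [sum_range_succ', sum_congr rfl hf_succ, ← mul_sum,
          sum_choose_mul_pow_mul_harmonic_sub, hf_zero, add_comm]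
    _ = _ := pow_div_add_mul_sum_pow_div m x

/-- The two expressions for the winning probability of the `x`-strategy agree. -/
theorem stmt0 (n : ℕ) (hn : 1 ≤ n) (x : ℝ) (hx : x ∈ Set.Icc (0:ℝ) 1) :
    ∑ k ∈ Finset.range n, (n.choose k : ℝ) * x ^ k * (1 - x) ^ (n - k) * sfun (k + 1) n
      = 1 - x - ∑ k ∈ Finset.Icc 2 n, (1 - x) ^ k / ((k : ℝ) * ((k : ℝ) - 1)) :=
  stmt0_general n hn x
end

section
/- The polynomials p_1 and p_2 are strictly decreasing on [0,1]. For every n ≥ 3 there is a unique point x_n ∈ (0,1) at which p_n attains its maximum over [0,1]; p_n is strictly increasing on [0,x_n] and strictly decreasing on [x_n,1], and x_n is the unique root in (0,1) of the equation Σ_{j=1}^{n-1} (1-x)^j/j = 1. -/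
open Finset Real

/-!
Differentiating term by term, `p_n' x = S_n x - 1` with `S_n x = Σ_{j=1}^{n-1} (1-x)^j/j`,
a partial sum of the series of `-log x`. For `n ≤ 2`, `S_n x` is `0` or `1 - x`, so `p_n' < 0`
on `(0,1)`. For `n ≥ 3`, `S_n` decreases strictly on `[0,1]` from `S_n 0 ≥ 1 + 1/2` to
`S_n 1 = 0`, so it crosses `1` at exactly one `x_n`; `p_n'` is positive before `x_n` and
negative after it, which makes `p_n` unimodal with peak `x_n`.
-/

/-- `p_n(x) = 1 - x - Σ_{k=2}^{n} (1-x)^k/(k(k-1))`, the winning probability of the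
`x`-strategy with `n` items. -/
noncomputable def pwin (n : ℕ) (x : ℝ) : ℝ :=
  1 - x - ∑ k ∈ Finset.Icc 2 n, (1 - x) ^ k / ((k : ℝ) * ((k : ℝ) - 1))

section Unimodal

variable {f : ℝ → ℝ} {a b c : ℝ}

theorem isMaxOn_of_strictMonoOn_of_strictAntiOn (hc : c ∈ Set.Icc a b)
    (hmono : StrictMonoOn f (Set.Icc a c)) (hanti : StrictAntiOn f (Set.Icc c b)) :
    IsMaxOn f (Set.Icc a b) c := by
  intro y hy
  rcases le_total y c with h | h
  · exact hmono.monotoneOn ⟨hy.1, h⟩ ⟨hc.1, le_rfl⟩ h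
  · exact hanti.antitoneOn ⟨le_rfl, hc.2⟩ ⟨h, hy.2⟩ h

theorem eq_of_isMaxOn_of_strictMonoOn_of_strictAntiOn (hc : c ∈ Set.Icc a b)
    (hmono : StrictMonoOn f (Set.Icc a c)) (hanti : StrictAntiOn f (Set.Icc c b))
    {y : ℝ} (hy : y ∈ Set.Icc a b) (hmax : IsMaxOn f (Set.Icc a b) y) : y = c := by
  have hle : f c ≤ f y := hmax hc
  by_contra hne
  rcases lt_or_gt_of_ne hne with h | h
  · exact (hmono ⟨hy.1, h.le⟩ ⟨hc.1, le_rfl⟩ h).not_ge hle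
  · exact (hanti ⟨le_rfl, hc.2⟩ ⟨h.le, hy.2⟩ h).not_ge hle

end Unimodal

theorem sum_Icc_two_pred {M : Type*} [AddCommMonoid M] (n : ℕ) (g : ℕ → M) :
    ∑ k ∈ Icc 2 n, g (k - 1) = ∑ j ∈ Icc 1 (n - 1), g j := by
  cases n with
  | zero => rfl
  | succ m =>
    rw [← map_add_right_Icc 1 m 1, sum_map]
    simp

noncomputable def negLogPartialSum (n : ℕ) (x : ℝ) : ℝ :=
  ∑ j ∈ Icc 1 (n - 1), (1 - x) ^ j / (j : ℝ)

theorem continuous_negLogPartialSum (n : ℕ) : Continuous (negLogPartialSum n) := by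
  unfold negLogPartialSum
  fun_prop

theorem negLogPartialSum_one (n : ℕ) : negLogPartialSum n 1 = 0 :=
  sum_eq_zero fun j hj => by simp [Nat.one_le_iff_ne_zero.mp (mem_Icc.mp hj).1]

theorem negLogPartialSum_strictAntiOn {n : ℕ} (hn : 2 ≤ n) :
    StrictAntiOn (negLogPartialSum n) (Set.Icc 0 1) := by
  intro x _ y hy hxy
  refine sum_lt_sum_of_nonempty ⟨1, mem_Icc.mpr ⟨le_rfl, by omega⟩⟩ fun j hj => ?_
  have hj : 0 < j := (mem_Icc.mp hj).1
  gcongr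
  linarith [hy.2]

theorem one_lt_negLogPartialSum_zero {n : ℕ} (hn : 3 ≤ n) : 1 < negLogPartialSum n 0 := by
  have hsub : ({1, 2} : Finset ℕ) ⊆ Icc 1 (n - 1) := by
    intro j hj
    simp only [mem_insert, mem_singleton] at hj
    rw [mem_Icc]
    omega
  calc (1 : ℝ) < ∑ j ∈ ({1, 2} : Finset ℕ), (1 - 0 : ℝ) ^ j / (j : ℝ) := by norm_num
    _ ≤ negLogPartialSum n 0 := sum_le_sum_of_subset_of_nonneg hsub fun _ _ _ => by positivity

theorem negLogPartialSum_lt_one {n : ℕ} (hn : n ≤ 2) {x : ℝ} (hx : 0 < x) :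
    negLogPartialSum n x < 1 := by
  interval_cases n <;> simp [negLogPartialSum, hx]

theorem hasDerivAt_pwin (n : ℕ) (x : ℝ) :
    HasDerivAt (pwin n) (negLogPartialSum n x - 1) x := by
  have hterm : ∀ k ∈ Icc 2 n, HasDerivAt (fun x : ℝ => (1 - x) ^ k / ((k : ℝ) * ((k : ℝ) - 1)))
      (-((1 - x) ^ (k - 1) / ((k - 1 : ℕ) : ℝ))) x := by
    intro k hk
    have hk2 : 2 ≤ k := (mem_Icc.mp hk).1
    have hk2' : (2 : ℝ) ≤ k := by exact_mod_cast hk2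
    refine ((((hasDerivAt_id' x).const_sub 1).pow k).div_const _).congr_deriv ?_
    rw [Nat.cast_pred (by omega)]
    field_simp
  refine (((hasDerivAt_id' x).const_sub 1).sub (HasDerivAt.fun_sum hterm)).congr_deriv ?_
  rw [sum_neg_distrib, sum_Icc_two_pred n fun j => (1 - x) ^ j / (j : ℝ), negLogPartialSum]
  ring

theorem continuous_pwin (n : ℕ) : Continuous (pwin n) :=
  continuous_iff_continuousAt.mpr fun x => (hasDerivAt_pwin n x).continuousAt

theorem pwin_strictMonoOn_of_one_lt {n : ℕ} {a b : ℝ}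
    (h : ∀ x ∈ Set.Ioo a b, 1 < negLogPartialSum n x) : StrictMonoOn (pwin n) (Set.Icc a b) :=
  strictMonoOn_of_hasDerivWithinAt_pos (convex_Icc a b) (continuous_pwin n).continuousOn
    (fun x _ => (hasDerivAt_pwin n x).hasDerivWithinAt)
    (fun x hx => sub_pos.mpr (h x (by rwa [interior_Icc] at hx)))

theorem pwin_strictAntiOn_of_lt_one {n : ℕ} {a b : ℝ}
    (h : ∀ x ∈ Set.Ioo a b, negLogPartialSum n x < 1) : StrictAntiOn (pwin n) (Set.Icc a b) :=
  strictAntiOn_of_hasDerivWithinAt_neg (convex_Icc a b) (continuous_pwin n).continuousOn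
    (fun x _ => (hasDerivAt_pwin n x).hasDerivWithinAt)
    (fun x hx => sub_neg.mpr (h x (by rwa [interior_Icc] at hx)))

theorem pwin_strictAntiOn_of_le_two {n : ℕ} (hn : n ≤ 2) : StrictAntiOn (pwin n) (Set.Icc 0 1) :=
  pwin_strictAntiOn_of_lt_one fun _ hx => negLogPartialSum_lt_one hn hx.1

theorem stmt3 :
    StrictAntiOn (pwin 1) (Set.Icc (0:ℝ) 1) ∧
    StrictAntiOn (pwin 2) (Set.Icc (0:ℝ) 1) ∧
    (∀ n : ℕ, 3 ≤ n → ∃ xn ∈ Set.Ioo (0:ℝ) 1,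
      IsMaxOn (pwin n) (Set.Icc (0:ℝ) 1) xn ∧
      (∀ y ∈ Set.Icc (0:ℝ) 1, IsMaxOn (pwin n) (Set.Icc (0:ℝ) 1) y → y = xn) ∧
      StrictMonoOn (pwin n) (Set.Icc (0:ℝ) xn) ∧
      StrictAntiOn (pwin n) (Set.Icc xn 1) ∧
      (∀ y ∈ Set.Ioo (0:ℝ) 1,
        (∑ j ∈ Finset.Icc 1 (n - 1), (1 - y) ^ j / (j : ℝ)) = 1 ↔ y = xn)) := by
  refine ⟨pwin_strictAntiOn_of_le_two (by norm_num), pwin_strictAntiOn_of_le_two le_rfl,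
    fun n hn => ?_⟩
  obtain ⟨xn, hxn, hroot⟩ := intermediate_value_Ioo' zero_le_one
    (continuous_negLogPartialSum n).continuousOn
    ⟨by rw [negLogPartialSum_one]; exact zero_lt_one, one_lt_negLogPartialSum_zero hn⟩
  have hxn' : xn ∈ Set.Icc (0 : ℝ) 1 := Set.Ioo_subset_Icc_self hxn
  have hS := negLogPartialSum_strictAntiOn (by omega : 2 ≤ n)
  have hmono : StrictMonoOn (pwin n) (Set.Icc 0 xn) := pwin_strictMonoOn_of_one_lt fun x hx =>
    hroot ▸ hS ⟨hx.1.le, hx.2.le.trans hxn.2.le⟩ hxn' hx.2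
  have hanti : StrictAntiOn (pwin n) (Set.Icc xn 1) := pwin_strictAntiOn_of_lt_one fun x hx =>
    hroot ▸ hS hxn' ⟨hxn.1.le.trans hx.1.le, hx.2.le⟩ hx.1
  refine ⟨xn, hxn, isMaxOn_of_strictMonoOn_of_strictAntiOn hxn' hmono hanti,
    fun y hy => eq_of_isMaxOn_of_strictMonoOn_of_strictAntiOn hxn' hmono hanti hy, hmono, hanti,
    fun y hy => ⟨fun h => hS.injOn (Set.Ioo_subset_Icc_self hy) hxn' (h.trans hroot.symm),
      fun h => h ▸ hroot⟩⟩
end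

section
/- The maximum points x_n of p_n satisfy: x_n < x_{n+1} for all n ≥ 3, x_n < 1/e for all n ≥ 3, and x_n → 1/e as n → ∞. -/
open Finset Real Filter

lemma aux_S_mono {m : ℕ} (hm : 1 ≤ m) {a b : ℝ} (ha : 0 ≤ a) (hab : a < b) :
    ∑ j ∈ Finset.Icc 1 m, a ^ j / (j : ℝ) < ∑ j ∈ Finset.Icc 1 m, b ^ j / (j : ℝ) := by
  apply Finset.sum_lt_sum
  · intro j hj
    have hj1 : 1 ≤ j := (Finset.mem_Icc.mp hj).1
    have hjpos : (0:ℝ) < j := by exact_mod_cast hj1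
    gcongr
  · refine ⟨1, Finset.mem_Icc.mpr ⟨le_refl 1, hm⟩, ?_⟩
    simpa using hab

lemma aux_S_mono_le {m : ℕ} {a b : ℝ} (ha : 0 ≤ a) (hab : a ≤ b) :
    ∑ j ∈ Finset.Icc 1 m, a ^ j / (j : ℝ) ≤ ∑ j ∈ Finset.Icc 1 m, b ^ j / (j : ℝ) := by
  apply Finset.sum_le_sum
  intro j hj
  have hj1 : 1 ≤ j := (Finset.mem_Icc.mp hj).1
  have hjpos : (0:ℝ) < j := by exact_mod_cast hj1
  gcongr

/-- Rewrite the `Icc` sum as a `range` sum matching the log series. -/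
lemma aux_Icc_range (t : ℝ) (m : ℕ) :
    ∑ j ∈ Finset.Icc 1 m, t ^ j / (j : ℝ) = ∑ j ∈ Finset.range m, t ^ (j + 1) / ((j : ℝ) + 1) := by
  rw [← Finset.Ico_add_one_right_eq_Icc, Finset.sum_Ico_eq_sum_range]
  simp [add_comm 1]

set_option maxHeartbeats 1000000 in
/-- If `x n` is the maximum point of `p_n` on `[0,1]`, equivalently
the root in `(0,1)` of `Σ_{j=1}^{n-1} (1-x)^j/j = 1`, then the sequence is strictly
increasing, stays below `1/e`, and converges to `1/e`. -/
theorem stmt4 (x : ℕ → ℝ)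
    (hx : ∀ n : ℕ, 3 ≤ n → x n ∈ Set.Ioo (0:ℝ) 1 ∧
      (∑ j ∈ Finset.Icc 1 (n - 1), (1 - x n) ^ j / (j : ℝ)) = 1) :
    (∀ n : ℕ, 3 ≤ n → x n < x (n + 1)) ∧
    (∀ n : ℕ, 3 ≤ n → x n < (Real.exp 1)⁻¹) ∧
    Tendsto x atTop (nhds (Real.exp 1)⁻¹) := by
  -- basic facts about t n = 1 - x n
  have ht0 : ∀ n : ℕ, 3 ≤ n → 0 < 1 - x n := fun n hn => by
    have := (hx n hn).1.2; linarith
  have ht1 : ∀ n : ℕ, 3 ≤ n → 1 - x n < 1 := fun n hn => by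
    have := (hx n hn).1.1; linarith
  -- Part 1: strict increase
  have part1 : ∀ n : ℕ, 3 ≤ n → x n < x (n + 1) := by
    intro n hn
    have hn1 : 1 ≤ n - 1 := by omega
    have hEq1 : ∑ j ∈ Finset.Icc 1 (n - 1), (1 - x n) ^ j / (j : ℝ) = 1 := (hx n hn).2
    have hEq2 : ∑ j ∈ Finset.Icc 1 n, (1 - x (n + 1)) ^ j / (j : ℝ) = 1 := by
      have := (hx (n + 1) (by omega)).2
      simpa using this
    -- split the second sum
    have hsplit : ∑ j ∈ Finset.Icc 1 n, (1 - x (n+1)) ^ j / (j : ℝ)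
        = ∑ j ∈ Finset.Icc 1 (n-1), (1 - x (n+1)) ^ j / (j : ℝ)
          + (1 - x (n+1)) ^ n / (n : ℝ) := by
      have hne : n - 1 + 1 = n := by omega
      rw [← hne, Finset.sum_Icc_succ_top (by omega)]
      rw [hne]
    have hpos : 0 < (1 - x (n+1)) ^ n / (n : ℝ) := by
      apply div_pos (pow_pos (ht0 (n+1) (by omega)) n)
      exact_mod_cast (by omega : 0 < n)
    have hlt : ∑ j ∈ Finset.Icc 1 (n-1), (1 - x (n+1)) ^ j / (j : ℝ)
        < ∑ j ∈ Finset.Icc 1 (n-1), (1 - x n) ^ j / (j : ℝ) := by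
      rw [hEq1]; linarith [hsplit, hEq2]
    by_contra hcon
    push_neg at hcon
    have : 1 - x n ≤ 1 - x (n+1) := by linarith
    have := aux_S_mono_le (a := 1 - x n) (b := 1 - x (n+1)) (m := n - 1)
      (ht0 n hn).le this
    linarith
  -- the log series setup
  have hseries : ∀ n : ℕ, 3 ≤ n →
      HasSum (fun j : ℕ => (1 - x n) ^ (j + 1) / ((j : ℝ) + 1)) (-Real.log (x n)) := by
    intro n hn
    have habs : |1 - x n| < 1 := by
      rw [abs_lt]; constructor <;> [linarith [ht0 n hn]; exact ht1 n hn]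
    have := hasSum_pow_div_log_of_abs_lt_one habs
    have hx1 : 1 - (1 - x n) = x n := by ring
    rw [hx1] at this
    exact this
  -- key bound: 1 < -log (x n)
  have part2' : ∀ n : ℕ, 3 ≤ n → 1 + (1 - x n) ^ n / (n : ℝ) ≤ -Real.log (x n) := by
    intro n hn
    have H := hseries n hn
    have hfin : ∑ j ∈ Finset.range (n - 1), (1 - x n) ^ (j + 1) / ((j : ℝ) + 1) = 1 := by
      rw [← aux_Icc_range]; exact (hx n hn).2
    have hfin2 : ∑ j ∈ Finset.range n, (1 - x n) ^ (j + 1) / ((j : ℝ) + 1)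
        = 1 + (1 - x n) ^ n / (n : ℝ) := by
      have hne : n - 1 + 1 = n := by omega
      have hcast : ((n - 1 : ℕ) : ℝ) + 1 = (n : ℝ) := by
        rw [Nat.cast_sub (by omega : 1 ≤ n)]; ring
      rw [← hne, Finset.sum_range_succ, hne, hfin, hcast]
    calc 1 + (1 - x n) ^ n / (n : ℝ)
        = ∑ j ∈ Finset.range n, (1 - x n) ^ (j + 1) / ((j : ℝ) + 1) := hfin2.symm
      _ ≤ -Real.log (x n) := by
          rw [← H.tsum_eq]
          apply Summable.sum_le_tsum _ (fun i _ => ?_) H.summable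
          exact div_nonneg (pow_nonneg (ht0 n hn).le _) (by positivity)
  -- Part 2
  have part2 : ∀ n : ℕ, 3 ≤ n → x n < (Real.exp 1)⁻¹ := by
    intro n hn
    have h1 : 1 < -Real.log (x n) := by
      have hpos : 0 < (1 - x n) ^ n / (n : ℝ) := by
        apply div_pos (pow_pos (ht0 n hn) n)
        exact_mod_cast (by omega : 0 < n)
      linarith [part2' n hn]
    have hx0 : 0 < x n := (hx n hn).1.1
    have : Real.log (x n) < -1 := by linarith
    calc x n = Real.exp (Real.log (x n)) := (Real.exp_log hx0).symm
      _ < Real.exp (-1) := Real.exp_lt_exp.mpr this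
      _ = (Real.exp 1)⁻¹ := Real.exp_neg 1
  refine ⟨part1, part2, ?_⟩
  -- monotone: x 3 ≤ x n for n ≥ 3
  have hmono : ∀ n : ℕ, 3 ≤ n → x 3 ≤ x n := by
    intro n hn
    induction n with
    | zero => omega
    | succ m ih =>
      rcases Nat.lt_or_ge m 3 with hm | hm
      · have : m + 1 = 3 := by omega
        rw [this]
      · exact (ih hm).trans (part1 m hm).le
  set c : ℝ := 1 - x 3 with hc
  have hc0 : 0 < c := ht0 3 le_rfl
  have hc1 : c < 1 := ht1 3 le_rfl
  -- upper bound on the tail: -log (x n) ≤ 1 + c^n/(1-c)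
  have tailbd : ∀ n : ℕ, 3 ≤ n → -Real.log (x n) ≤ 1 + c ^ n * (1 - c)⁻¹ := by
    intro n hn
    have H := hseries n hn
    have htc : 1 - x n ≤ c := by have := hmono n hn; simp only [hc]; linarith
    have ht0n := ht0 n hn
    have hfin : ∑ j ∈ Finset.range (n - 1), (1 - x n) ^ (j + 1) / ((j : ℝ) + 1) = 1 := by
      rw [← aux_Icc_range]; exact (hx n hn).2
    have hsplit := Summable.sum_add_tsum_nat_add (f := fun j : ℕ => (1 - x n) ^ (j + 1) / ((j : ℝ) + 1))
      (n - 1) H.summable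
    rw [H.tsum_eq, hfin] at hsplit
    have htail : (∑' j : ℕ, (1 - x n) ^ (j + (n - 1) + 1) / ((j + (n - 1) : ℕ) + 1 : ℝ))
        ≤ c ^ n * (1 - c)⁻¹ := by
      have hgeom : HasSum (fun j : ℕ => c ^ n * c ^ j) (c ^ n * (1 - c)⁻¹) :=
        (hasSum_geometric_of_lt_one hc0.le hc1).mul_left _
      have hsum2 : Summable fun j : ℕ => (1 - x n) ^ (j + (n - 1) + 1) / ((j + (n - 1) : ℕ) + 1 : ℝ) :=
        ((summable_nat_add_iff (n - 1)).mpr H.summable)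
      rw [← hgeom.tsum_eq]
      apply Summable.tsum_le_tsum _ hsum2 hgeom.summable
      intro j
      have hexp : j + (n - 1) + 1 = n + j := by omega
      rw [hexp]
      have hden : (1 : ℝ) ≤ ((j + (n - 1) : ℕ) : ℝ) + 1 := by
        have : (0:ℝ) ≤ ((j + (n - 1) : ℕ) : ℝ) := Nat.cast_nonneg _
        linarith
      calc (1 - x n) ^ (n + j) / (((j + (n - 1) : ℕ) : ℝ) + 1)
          ≤ (1 - x n) ^ (n + j) := div_le_self (pow_nonneg ht0n.le _) hden
        _ ≤ c ^ (n + j) := pow_le_pow_left₀ ht0n.le htc _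
        _ = c ^ n * c ^ j := pow_add c n j
    linarith [hsplit, htail]
  -- squeeze
  have hlow : ∀ n : ℕ, 3 ≤ n → Real.exp (-1 - c ^ n * (1 - c)⁻¹) ≤ x n := by
    intro n hn
    have hx0 : 0 < x n := (hx n hn).1.1
    have hlog : -1 - c ^ n * (1 - c)⁻¹ ≤ Real.log (x n) := by
      have := tailbd n hn; linarith
    calc Real.exp (-1 - c ^ n * (1 - c)⁻¹) ≤ Real.exp (Real.log (x n)) :=
          Real.exp_le_exp.mpr hlog
      _ = x n := Real.exp_log hx0
  have hlowlim : Tendsto (fun n : ℕ => Real.exp (-1 - c ^ n * (1 - c)⁻¹)) atTop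
      (nhds (Real.exp 1)⁻¹) := by
    have h1 : Tendsto (fun n : ℕ => c ^ n) atTop (nhds 0) :=
      tendsto_pow_atTop_nhds_zero_of_lt_one hc0.le hc1
    have h2 : Tendsto (fun n : ℕ => -1 - c ^ n * (1 - c)⁻¹) atTop (nhds (-1)) := by
      have := (h1.mul_const (1 - c)⁻¹).const_sub (-1 : ℝ)
      simpa using this
    have := (Real.continuous_exp.tendsto (-1)).comp h2
    rw [Real.exp_neg] at this
    exact this
  apply tendsto_of_tendsto_of_tendsto_of_le_of_le' hlowlim tendsto_const_nhds
  · filter_upwards [eventually_ge_atTop 3] with n hn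
    exact hlow n hn
  · filter_upwards [eventually_ge_atTop 3] with n hn
    exact (part2 n hn).le
end

section
/- The sequence p_n(1/e) is strictly decreasing in n and converges to 1/e; in particular p_n(1/e) > 1/e for every n ≥ 1, so the 1/e-strategy wins with probability strictly above 1/e against every number of items. -/
open Finset Real Filter

theorem pwin_succ (x : ℝ) {n : ℕ} (hn : 1 ≤ n) :
    pwin (n + 1) x = pwin n x - (1 - x) ^ (n + 1) / (((n : ℝ) + 1) * n) := by
  rw [pwin, pwin, Finset.sum_Icc_succ_top (by omega)]
  push_cast
  ring

theorem pwin_succ_lt {x : ℝ} (hx : x < 1) {n : ℕ} (hn : 1 ≤ n) :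
    pwin (n + 1) x < pwin n x := by
  have hn' : (0 : ℝ) < n := by exact_mod_cast hn
  rw [pwin_succ x hn, sub_lt_self_iff]
  exact div_pos (pow_pos (by linarith) _) (by positivity)

theorem strictAnti_pwin_succ {x : ℝ} (hx : x < 1) : StrictAnti fun n : ℕ => pwin (n + 1) x :=
  strictAnti_nat_of_succ_lt fun n => pwin_succ_lt hx (by omega)

theorem hasSum_pow_add_two_div_add_two_mul_add_one {t : ℝ} (ht : |t| < 1) :
    HasSum (fun n : ℕ => t ^ (n + 2) / (((n : ℝ) + 2) * ((n : ℝ) + 1)))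
      ((1 - t) * log (1 - t) + t) := by
  have hlog := hasSum_pow_div_log_of_abs_lt_one ht
  have htail : HasSum (fun n : ℕ => t ^ (n + 2) / ((n : ℝ) + 2)) (-log (1 - t) - t) := by
    have h := (hasSum_nat_add_iff' 1).mpr hlog
    simp only [Finset.range_one, Finset.sum_singleton, zero_add, pow_one, Nat.cast_zero, div_one,
      Nat.cast_add, Nat.cast_one, add_assoc, one_add_one_eq_two] at h
    exact h
  have hsplit : ∀ n : ℕ, t ^ (n + 2) / (((n : ℝ) + 2) * ((n : ℝ) + 1)) =
      t * (t ^ (n + 1) / ((n : ℝ) + 1)) - t ^ (n + 2) / ((n : ℝ) + 2) := fun n => by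
    field_simp
    ring
  simp only [hsplit]
  rw [show (1 - t) * log (1 - t) + t = t * -log (1 - t) - (-log (1 - t) - t) by ring]
  exact (hlog.mul_left t).sub htail

theorem pwin_eq_sub_sum_range (n : ℕ) (x : ℝ) :
    pwin n x = 1 - x - ∑ j ∈ Finset.range (n - 1),
      (1 - x) ^ (j + 2) / (((j : ℝ) + 2) * ((j : ℝ) + 1)) := by
  rw [pwin, ← Finset.Ico_succ_right_eq_Icc, Finset.sum_Ico_eq_sum_range,
    Order.succ_eq_add_one, show n + 1 - 2 = n - 1 by omega]
  congr 1
  refine Finset.sum_congr rfl fun j _ => ?_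
  rw [add_comm 2 j]
  push_cast
  ring

theorem tendsto_pwin {x : ℝ} (hx₀ : 0 < x) (hx₂ : x < 2) :
    Tendsto (fun n : ℕ => pwin n x) atTop (nhds (-x * log x)) := by
  have hsum := hasSum_pow_add_two_div_add_two_mul_add_one (t := 1 - x) (by rw [abs_lt]; constructor <;> linarith)
  rw [sub_sub_cancel] at hsum
  have h := (hsum.tendsto_sum_nat.comp (tendsto_sub_atTop_nat 1)).const_sub (1 - x)
  convert h using 2 with n
  · exact pwin_eq_sub_sum_range n x
  · ring

theorem neg_mul_log_lt_pwin {x : ℝ} (hx₀ : 0 < x) (hx₁ : x < 1) {n : ℕ} (hn : 1 ≤ n) :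
    -x * log x < pwin n x := by
  have hlim := (tendsto_add_atTop_iff_nat 1).mpr (tendsto_pwin hx₀ (by linarith))
  calc -x * log x ≤ pwin (n + 1) x := (strictAnti_pwin_succ hx₁).antitone.le_of_tendsto hlim n
    _ < pwin n x := pwin_succ_lt hx₁ hn

theorem stmt5 :
    (∀ n : ℕ, 1 ≤ n → pwin (n + 1) (Real.exp 1)⁻¹ < pwin n (Real.exp 1)⁻¹) ∧
    Tendsto (fun n : ℕ => pwin n (Real.exp 1)⁻¹) atTop (nhds (Real.exp 1)⁻¹) ∧
    (∀ n : ℕ, 1 ≤ n → (Real.exp 1)⁻¹ < pwin n (Real.exp 1)⁻¹) := by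
  have hx₀ : 0 < (exp 1)⁻¹ := by positivity
  have hx₁ : (exp 1)⁻¹ < 1 := inv_lt_one_of_one_lt₀ (one_lt_exp_iff.mpr one_pos)
  have hfix : -(exp 1)⁻¹ * log (exp 1)⁻¹ = (exp 1)⁻¹ := by
    rw [log_inv, log_exp]
    ring
  refine ⟨fun n hn => pwin_succ_lt hx₁ hn, ?_, fun n hn => ?_⟩
  · simpa only [hfix] using tendsto_pwin hx₀ (by linarith)
  · simpa only [hfix] using neg_mul_log_lt_pwin hx₀ hx₁ hn
end

section
/- If 1/e ≤ x < y ≤ 1 then p_n(x) > p_n(y) for every n ≥ 1; that is, the x-strategy strictly dominates the y-strategy for every number of items whenever 1/e ≤ x < y ≤ 1. -/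
open Finset Real

lemma sum_range_pow_succ_div_le_neg_log (N : ℕ) {u : ℝ} (hu₀ : 0 ≤ u) (hu₁ : u < 1) :
    ∑ m ∈ range N, u ^ (m + 1) / (m + 1) ≤ -log (1 - u) :=
  sum_le_hasSum _ (fun m _ => by positivity)
    (hasSum_pow_div_log_of_abs_lt_one (by rwa [abs_of_nonneg hu₀]))

lemma sum_Icc_two_pow_pred_div_le_neg_log (n : ℕ) {u : ℝ} (hu₀ : 0 ≤ u) (hu₁ : u < 1) :
    ∑ k ∈ Icc 2 n, u ^ (k - 1) / ((k : ℝ) - 1) ≤ -log (1 - u) := by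
  have reindex : ∑ k ∈ Icc 2 n, u ^ (k - 1) / ((k : ℝ) - 1)
      = ∑ m ∈ range (n + 1 - 2), u ^ (m + 1) / ((m : ℝ) + 1) := by
    rw [← Ico_add_one_right_eq_Icc, sum_Ico_eq_sum_range]
    refine sum_congr rfl fun m _ => ?_
    rw [show 2 + m - 1 = m + 1 by omega]
    push_cast
    ring
  rw [reindex]
  exact sum_range_pow_succ_div_le_neg_log _ hu₀ hu₁

lemma hasDerivAt_pwin_s7 (n : ℕ) (x : ℝ) :
    HasDerivAt (pwin n) (-1 + ∑ k ∈ Icc 2 n, (1 - x) ^ (k - 1) / ((k : ℝ) - 1)) x := by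
  have hlin : HasDerivAt (fun x : ℝ => 1 - x) (-1) x := by
    simpa using (hasDerivAt_id x).const_sub 1
  have hterm : ∀ k ∈ Icc 2 n, HasDerivAt (fun x : ℝ => (1 - x) ^ k / ((k : ℝ) * ((k : ℝ) - 1)))
      (-((1 - x) ^ (k - 1) / ((k : ℝ) - 1))) x := by
    intro k hk
    have hk : (2 : ℝ) ≤ k := by exact_mod_cast (mem_Icc.mp hk).1
    refine ((hlin.pow k).div_const _).congr_deriv ?_
    have : (k : ℝ) - 1 ≠ 0 := by linarith
    field_simp
  refine (hlin.sub (HasDerivAt.fun_sum hterm)).congr_deriv ?_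
  rw [sum_neg_distrib]
  ring

lemma neg_one_add_sum_Icc_two_lt_zero (n : ℕ) {x : ℝ} (hx : (exp 1)⁻¹ < x) (hx₁ : x ≤ 1) :
    -1 + ∑ k ∈ Icc 2 n, (1 - x) ^ (k - 1) / ((k : ℝ) - 1) < 0 := by
  have hsum := sum_Icc_two_pow_pred_div_le_neg_log n (u := 1 - x) (by linarith)
    (by linarith [inv_pos.mpr (exp_pos 1)])
  have hlog : -1 < log x := by
    simpa [log_inv] using log_lt_log (inv_pos.mpr (exp_pos 1)) hx
  rw [sub_sub_cancel] at hsum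
  linarith

lemma pwin_strictAntiOn (n : ℕ) : StrictAntiOn (pwin n) (Set.Icc (exp 1)⁻¹ 1) := by
  refine strictAntiOn_of_hasDerivWithinAt_neg (convex_Icc _ _)
    (fun x _ => (hasDerivAt_pwin_s7 n x).continuousAt.continuousWithinAt)
    (fun x _ => (hasDerivAt_pwin_s7 n x).hasDerivWithinAt) fun x hx => ?_
  rw [interior_Icc] at hx
  exact neg_one_add_sum_Icc_two_lt_zero n hx.1 hx.2.le

theorem stmt7_general (x y : ℝ) (hx : (Real.exp 1)⁻¹ ≤ x) (hxy : x < y) (hy : y ≤ 1)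
    (n : ℕ) : pwin n y < pwin n x :=
  pwin_strictAntiOn n ⟨hx, (hxy.trans_le hy).le⟩ ⟨hx.trans hxy.le, hy⟩ hxy

theorem stmt7 (x y : ℝ) (hx : (Real.exp 1)⁻¹ ≤ x) (hxy : x < y) (hy : y ≤ 1)
    (n : ℕ) (hn : 1 ≤ n) : pwin n y < pwin n x :=
  stmt7_general x y hx hxy hy n
end

section
/- Fix n ≥ 1 and let a = (a_1,…,a_n) satisfy 1 > a_1 > a_2 > … > a_n > 0. Then for every k with 1 ≤ k ≤ n, the partial derivative of w_n with respect to a_k equals ∂w_n(a)/∂a_k = C(n-1,k-1)·a_k^{k-1}·(1-a_k)^{n-k}·(h(k+1,n) - 1). -/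
open Finset Real intervalIntegral

/-- `π_{n,k}(a)` for a cutoff sequence `a` (indexed from 1):
`π_{n,0}(a) = (1-a_1)^n` and for `1 ≤ k ≤ n-1`
`π_{n,k}(a) = n·C(n-1,k-1)·∫_{a_{k+1}}^{a_k} t^{k-1}(1-t)^{n-k} dt
  + C(n,k)·a_{k+1}^k·(1-a_{k+1})^{n-k}`. -/
noncomputable def piNK (n k : ℕ) (a : ℕ → ℝ) : ℝ :=
  if k = 0 then (1 - a 1) ^ n
  else (n : ℝ) * ((n - 1).choose (k - 1) : ℝ) *
        (∫ t in (a (k + 1))..(a k), t ^ (k - 1) * (1 - t) ^ (n - k)) +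
      (n.choose k : ℝ) * (a (k + 1)) ^ k * (1 - a (k + 1)) ^ (n - k)

/-- `w_n(a) = Σ_{k=0}^{n-1} π_{n,k}(a)·s(k+1,n)`, the winning probability of the cutoff
strategy with cutoffs `a_1 ≥ a_2 ≥ ⋯`. -/
noncomputable def w (n : ℕ) (a : ℕ → ℝ) : ℝ :=
  ∑ k ∈ Finset.range n, piNK n k a * sfun (k + 1) n

/-!
Only the terms `π_{n,k-1}` and `π_{n,k}` of `w_n` involve `a_k`. Write `ρ_j` for the density of
the `j`-th order statistic of `n` uniforms. By the fundamental theorem of calculus the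
`a_k`-derivative of `π_{n,k}` is `ρ_k(a_k)`. In `π_{n,k-1}` the boundary term
`C(n,k-1)·t^{k-1}(1-t)^{n-k+1}` has derivative `ρ_{k-1}(t) - ρ_k(t)`, and `ρ_{k-1}` cancels
against the integral, leaving `-ρ_k(a_k)`. Hence `∂w_n/∂a_k = ρ_k(a_k)·(s(k+1,n) - s(k,n))`,
and `n·(s(k+1,n) - s(k,n)) = h(k+1,n) - 1`.
-/

noncomputable def orderStatDensity (n j : ℕ) (x : ℝ) : ℝ :=
  n * (n - 1).choose (j - 1) * x ^ (j - 1) * (1 - x) ^ (n - j)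

lemma Nat.mul_choose_eq_mul_choose_sub_one {n j : ℕ} (hj : j ≠ 0) :
    j * n.choose j = n * (n - 1).choose (j - 1) := by
  obtain ⟨i, rfl⟩ := Nat.exists_eq_succ_of_ne_zero hj
  rcases n with _ | m
  · simp
  · simpa [mul_comm] using (Nat.add_one_mul_choose_eq m i).symm

lemma Nat.choose_mul_sub_eq (n j : ℕ) : n.choose j * (n - j) = n * (n - 1).choose j := by
  rcases n with _ | m
  · simp
  · simpa [mul_comm] using (Nat.choose_mul_succ_eq m j).symm

section piNK

variable {n : ℕ} {a : ℕ → ℝ}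

lemma piNK_update_of_ne {j k : ℕ} (hj : k ≠ j) (hj1 : k ≠ j + 1) (t : ℝ) :
    piNK n j (Function.update a k t) = piNK n j a := by
  rcases eq_or_ne j 0 with rfl | hj0
  · simp [piNK, Function.update_of_ne hj1.symm]
  · simp [piNK, hj0, Function.update_of_ne hj.symm, Function.update_of_ne hj1.symm]

lemma hasDerivAt_piNK_update_self {j : ℕ} (hj : j ≠ 0) (x : ℝ) :
    HasDerivAt (fun t => piNK n j (Function.update a j t)) (orderStatDensity n j x) x := by
  have hcont : Continuous fun s : ℝ => s ^ (j - 1) * (1 - s) ^ (n - j) := by fun_prop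
  have hint := integral_hasDerivAt_right (hcont.intervalIntegrable (a (j + 1)) x)
    (hcont.stronglyMeasurableAtFilter _ _) hcont.continuousAt
  simp only [piNK, hj, if_false, Function.update_self,
    Function.update_of_ne (Nat.succ_ne_self j)]
  refine ((hint.const_mul _).add_const _).congr_deriv ?_
  rw [orderStatDensity]
  ring

lemma hasDerivAt_piNK_update_succ (j : ℕ) (x : ℝ) :
    HasDerivAt (fun t => piNK n j (Function.update a (j + 1) t))
      (-orderStatDensity n (j + 1) x) x := by
  rcases eq_or_ne j 0 with rfl | hj
  · simp only [piNK, if_true, zero_add, Function.update_self]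
    refine (((hasDerivAt_id x).const_sub 1).pow n).congr_deriv ?_
    simp [orderStatDensity]
  have hcont : Continuous fun s : ℝ => s ^ (j - 1) * (1 - s) ^ (n - j) := by fun_prop
  have hint := integral_hasDerivAt_left (hcont.intervalIntegrable x (a j))
    (hcont.stronglyMeasurableAtFilter _ _) hcont.continuousAt
  have hbdry := ((hasDerivAt_pow j x).const_mul (n.choose j : ℝ)).mul
    (((hasDerivAt_id' x).const_sub 1).fun_pow (n - j))
  simp only [piNK, hj, if_false, Function.update_self,
    Function.update_of_ne (Nat.succ_ne_self j).symm]
  refine ((hint.const_mul _).add hbdry).congr_deriv ?_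
  have h₁ : (j : ℝ) * n.choose j = n * (n - 1).choose (j - 1) := by
    exact_mod_cast Nat.mul_choose_eq_mul_choose_sub_one hj
  have h₂ : (n.choose j : ℝ) * (n - j : ℕ) = n * (n - 1).choose j := by
    exact_mod_cast Nat.choose_mul_sub_eq n j
  simp only [orderStatDensity, Nat.add_sub_cancel, Nat.sub_sub]
  linear_combination (x ^ (j - 1) * (1 - x) ^ (n - j)) * h₁ -
    (x ^ j * (1 - x) ^ (n - (j + 1))) * h₂

lemma hasDerivAt_piNK_update {j k : ℕ} (hk : k ≠ 0) (x : ℝ) :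
    HasDerivAt (fun t => piNK n j (Function.update a k t))
      ((if k = j then orderStatDensity n k x else 0) -
        if k = j + 1 then orderStatDensity n k x else 0) x := by
  by_cases hkj : k = j
  · subst hkj
    simpa using hasDerivAt_piNK_update_self hk x
  by_cases hkj1 : k = j + 1
  · subst hkj1
    simpa using hasDerivAt_piNK_update_succ j x
  simpa [hkj, hkj1, piNK_update_of_ne hkj hkj1] using hasDerivAt_const x (piNK n j a)

end piNK

lemma hfun_of_lt {d n : ℕ} (h : n < d) : hfun d n = 0 := by
  simp [hfun, Finset.Icc_eq_empty_of_lt h]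

lemma hfun_eq_add {d n : ℕ} (h : d ≤ n) : hfun d n = 1 / ((d : ℝ) - 1) + hfun (d + 1) n := by
  rw [hfun, hfun, ← Finset.add_sum_Ioc_eq_sum_Icc h, Finset.Icc_add_one_left_eq_Ioc]

lemma sfun_succ {k : ℕ} (hk : k ≠ 0) (n : ℕ) : sfun (k + 1) n = k / n * hfun (k + 1) n := by
  simp [sfun, hk]

lemma sfun_eq {k n : ℕ} (hk : 1 ≤ k) (hkn : k ≤ n) :
    sfun k n = ((k - 1) * hfun (k + 1) n + 1) / n := by
  rcases hk.eq_or_lt with rfl | hk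
  · simp [sfun]
  have hk1 : (k : ℝ) - 1 ≠ 0 := sub_ne_zero.mpr (by exact_mod_cast hk.ne')
  rw [sfun, if_neg hk.ne', hfun_eq_add hkn]
  field_simp
  ring

lemma mul_sfun_succ_sub_sfun {k n : ℕ} (hk : 1 ≤ k) (hkn : k ≤ n) :
    n * (sfun (k + 1) n - sfun k n) = hfun (k + 1) n - 1 := by
  have hn : (n : ℝ) ≠ 0 := by exact_mod_cast (show n ≠ 0 by omega)
  rw [sfun_succ (by omega), sfun_eq hk hkn]
  field_simp
  ring

lemma hasDerivAt_w_update {n k : ℕ} (a : ℕ → ℝ) (hk : 1 ≤ k) (hkn : k ≤ n) (x : ℝ) :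
    HasDerivAt (fun t => w n (Function.update a k t))
      (orderStatDensity n k x * (sfun (k + 1) n - sfun k n)) x := by
  have hsum := HasDerivAt.fun_sum fun j (_ : j ∈ Finset.range n) =>
    (hasDerivAt_piNK_update (n := n) (a := a) (j := j) (by omega : k ≠ 0) x).mul_const
      (sfun (j + 1) n)
  refine hsum.congr_deriv ?_
  have hlast : k ∉ Finset.range n → sfun (k + 1) n = 0 := fun h => by
    rw [sfun_succ (by omega), hfun_of_lt (by simp at h; omega), mul_zero]
  simp only [sub_mul, ite_mul, zero_mul, Finset.sum_sub_distrib, Finset.sum_ite_eq]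
  rw [Finset.sum_eq_single_of_mem (k - 1) (by simp; omega) fun j _ hj => if_neg (by omega),
    Nat.sub_add_cancel hk, if_pos rfl]
  split_ifs with hmem
  · ring
  · rw [hlast hmem]
    ring

theorem stmt12_general (n : ℕ) (a : ℕ → ℝ)
    (k : ℕ) (hk1 : 1 ≤ k) (hkn : k ≤ n) :
    HasDerivAt (fun t : ℝ => w n (Function.update a k t))
      (((n - 1).choose (k - 1) : ℝ) * (a k) ^ (k - 1) * (1 - a k) ^ (n - k) *
        (hfun (k + 1) n - 1))
      (a k) := by
  refine (hasDerivAt_w_update a hk1 hkn (a k)).congr_deriv ?_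
  rw [orderStatDensity, ← mul_sfun_succ_sub_sfun hk1 hkn]
  ring

/-- Formula for the partial derivative of `w_n` in the `k`-th cutoff. -/
theorem stmt12 (n : ℕ) (hn : 1 ≤ n) (a : ℕ → ℝ)
    (hmono : ∀ i j : ℕ, 1 ≤ i → i < j → j ≤ n → a j < a i)
    (ha1 : a 1 < 1) (han : 0 < a n)
    (k : ℕ) (hk1 : 1 ≤ k) (hkn : k ≤ n) :
    HasDerivAt (fun t : ℝ => w n (Function.update a k t))
      (((n - 1).choose (k - 1) : ℝ) * (a k) ^ (k - 1) * (1 - a k) ^ (n - k) *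
        (hfun (k + 1) n - 1))
      (a k) :=
  stmt12_general n a k hk1 hkn
end

section
/- Let (a_k)_{k≥1} be a nonincreasing sequence in [0,1] with a_1 > 0 and a_k → x as k → ∞. Then w_n(a_1,…,a_n) → -x·log x as n → ∞ (with the convention 0·log 0 = 0). In particular, if x = 1/e the cutoff strategy is asymptotically optimal, achieving the limit winning probability 1/e. -/
open Finset Real Filter intervalIntegral

open Polynomial Topology

/-!
Write `B_{n,j}(t) = C(n,j) t^j (1-t)^(n-j)` for the Bernstein polynomials and
`G_{n,k} = binomTail n k = Σ_{j ≥ k} B_{n,j}`, so that `G_{n,k}(t)` is the tail `P(Bin(n,t) ≥ k)`. Since `G_{n,k}' = n B_{n-1,k-1}`, the integral in `π_{n,k}` telescopes and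
`π_{n,k}(a) = G_{n,k}(a_k) - G_{n,k+1}(a_{k+1})`: the `π_{n,k}`, `k ≤ n`, are the law of a
variable `Y_n` with `P(Y_n ≥ K) = G_{n,K}(a_K)`. As `x ≤ a_K ≤ x + δ` for large `K`, Chebyshev's
inequality for the binomial law shows that `Y_n / n` concentrates at `x`. Comparing the harmonic
sum `h(k+1,n)` with `log (n/k)` gives `s(k+1,n) = -(k/n) log (k/n) + O(1/n)`, so
`w_n(a) = E[-(Y_n/n) log (Y_n/n)] + O(1/n) → -x log x`.
-/

noncomputable def binomTail (n k : ℕ) : ℝ[X] := ∑ j ∈ Ico k (n + 1), bernsteinPolynomial ℝ n j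

namespace binomTail

@[simp]
lemma zero_right (n : ℕ) : binomTail n 0 = 1 := by
  rw [binomTail, ← range_eq_Ico, bernsteinPolynomial.sum]

lemma eq_zero_of_lt {n k : ℕ} (h : n < k) : binomTail n k = 0 := by
  rw [binomTail, Ico_eq_empty (by omega), sum_empty]

lemma eq_add {n k : ℕ} (h : k ≤ n) :
    binomTail n k = bernsteinPolynomial ℝ n k + binomTail n (k + 1) :=
  sum_eq_sum_Ico_succ_bot (by omega) _

lemma derivative_succ {n k : ℕ} (h : k < n) :
    derivative (binomTail n (k + 1)) = n * bernsteinPolynomial ℝ (n - 1) k := by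
  have htop : bernsteinPolynomial ℝ (n - 1) n = 0 :=
    bernsteinPolynomial.eq_zero_of_lt ℝ (by omega)
  rw [binomTail, derivative_sum, ← sum_Ico_add' (c := 1) (a := k) (b := n)]
  simp_rw [bernsteinPolynomial.derivative_succ]
  have htel := sum_Ico_sub (fun i => bernsteinPolynomial ℝ (n - 1) i) h.le
  rw [sum_sub_distrib, htop] at htel
  rw [← mul_sum, sum_sub_distrib]
  linear_combination (-(n : ℝ[X])) * htel

lemma sum_range_add {n K : ℕ} (hK : K ≤ n + 1) :
    ∑ j ∈ range K, bernsteinPolynomial ℝ n j + binomTail n K = 1 := by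
  rw [binomTail, sum_range_add_sum_Ico _ hK, bernsteinPolynomial.sum]

end binomTail

lemma bernsteinPolynomial_eval_nonneg {n ν : ℕ} {t : ℝ} (ht : t ∈ Set.Icc (0 : ℝ) 1) :
    0 ≤ (bernsteinPolynomial ℝ n ν).eval t := by
  have : 0 ≤ 1 - t := sub_nonneg.2 ht.2
  simp only [bernsteinPolynomial, eval_mul, eval_pow, eval_natCast, eval_X, eval_sub, eval_one]
  exact mul_nonneg (mul_nonneg (Nat.cast_nonneg _) (pow_nonneg ht.1 _)) (pow_nonneg this _)

lemma monotoneOn_eval_binomTail (n k : ℕ) : MonotoneOn (binomTail n k).eval (Set.Icc 0 1) := by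
  rcases Nat.eq_zero_or_pos k with rfl | hk
  · simp [MonotoneOn]
  rcases lt_or_ge n k with hnk | hkn
  · simp [binomTail.eq_zero_of_lt hnk, MonotoneOn]
  obtain ⟨k, rfl⟩ := Nat.exists_eq_add_of_le' hk
  refine monotoneOn_of_deriv_nonneg (convex_Icc 0 1) (binomTail n (k + 1)).continuousOn
    (binomTail n (k + 1)).differentiableOn fun t ht => ?_
  rw [Polynomial.deriv, binomTail.derivative_succ (by omega), eval_mul, eval_natCast]
  exact mul_nonneg (Nat.cast_nonneg _)
    (bernsteinPolynomial_eval_nonneg (interior_subset ht))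

lemma sum_bernsteinPolynomial_eval_le_of_far {n : ℕ} {p η : ℝ} (hp : p ∈ Set.Icc (0 : ℝ) 1)
    (hn : 0 < n) (hη : 0 < η) {S : Finset ℕ} (hS : S ⊆ range (n + 1))
    (hfar : ∀ j ∈ S, n * η ≤ |(j : ℝ) - n * p|) :
    ∑ j ∈ S, (bernsteinPolynomial ℝ n j).eval p ≤ 1 / (4 * n * η ^ 2) := by
  have hvar : ∑ j ∈ range (n + 1), ((j : ℝ) - n * p) ^ 2 * (bernsteinPolynomial ℝ n j).eval p =
      n * p * (1 - p) := by
    have h := congrArg (eval p) (bernsteinPolynomial.variance ℝ n)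
    simp only [eval_finsetSum, eval_mul, eval_pow, eval_sub, eval_X, eval_natCast,
      eval_one, nsmul_eq_mul] at h
    rw [← h]
    exact sum_congr rfl fun j _ => by ring
  have hnη : (0 : ℝ) < n * η := by positivity
  calc ∑ j ∈ S, (bernsteinPolynomial ℝ n j).eval p
      ≤ ∑ j ∈ S, ((j : ℝ) - n * p) ^ 2 / (n * η) ^ 2 * (bernsteinPolynomial ℝ n j).eval p := by
        refine sum_le_sum fun j hj =>
          le_mul_of_one_le_left (bernsteinPolynomial_eval_nonneg hp) ?_
        rw [one_le_div (by positivity), ← sq_abs ((j : ℝ) - n * p)]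
        exact pow_le_pow_left₀ hnη.le (hfar j hj) 2
    _ ≤ ∑ j ∈ range (n + 1), ((j : ℝ) - n * p) ^ 2 / (n * η) ^ 2 *
          (bernsteinPolynomial ℝ n j).eval p :=
        sum_le_sum_of_subset_of_nonneg hS fun j _ _ =>
          mul_nonneg (by positivity) (bernsteinPolynomial_eval_nonneg hp)
    _ = n * p * (1 - p) / (n * η) ^ 2 := by
        rw [← hvar, sum_div]
        exact sum_congr rfl fun j _ => by ring
    _ ≤ 1 / (4 * n * η ^ 2) := by
        rw [div_le_div_iff₀ (by positivity) (by positivity)]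
        have : p * (1 - p) ≤ 1 / 4 := by nlinarith [sq_nonneg (p - 1 / 2)]
        have hn' : (0 : ℝ) < n := by exact_mod_cast hn
        nlinarith [mul_pos hn' (mul_pos hn' (pow_pos hη 2))]

lemma tendsto_sum_mul_of_concentrated {p : ℕ → ℕ → ℝ} {f : ℝ → ℝ} {x : ℝ}
    (hp0 : ∀ n, ∀ k ∈ range (n + 1), 0 ≤ p n k) (hp1 : ∀ n, ∑ k ∈ range (n + 1), p n k = 1)
    (hf : ContinuousOn f (Set.Icc 0 1)) (hx : x ∈ Set.Icc 0 1)
    (hconc : ∀ η > 0, Tendsto (fun n : ℕ =>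
      ∑ k ∈ (range (n + 1)).filter (fun k : ℕ => η < |(k : ℝ) / n - x|), p n k) atTop (𝓝 0)) :
    Tendsto (fun n : ℕ => ∑ k ∈ range (n + 1), p n k * f (k / n)) atTop (𝓝 (f x)) := by
  obtain ⟨C, hC⟩ := isCompact_Icc.exists_bound_of_continuousOn hf
  rw [Metric.tendsto_nhds]
  intro ε hε
  obtain ⟨η, hη, hfη⟩ := Metric.continuousWithinAt_iff.1 (hf x hx) (ε / 2) (half_pos hε)
  have hfar := (hconc (η / 2) (half_pos hη)).const_mul (2 * C)
  rw [mul_zero] at hfar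
  filter_upwards [hfar.eventually (gt_mem_nhds (half_pos hε))] with n hn
  have hmem : ∀ k ∈ range (n + 1), (k : ℝ) / n ∈ Set.Icc (0 : ℝ) 1 := fun k hk =>
    ⟨by positivity,
      div_le_one_of_le₀ (Nat.cast_le.2 (mem_range_succ_iff.1 hk)) (Nat.cast_nonneg n)⟩
  have hpt : ∀ k ∈ range (n + 1), p n k * |f (k / n) - f x| ≤
      p n k * (ε / 2) + if η / 2 < |(k : ℝ) / n - x| then 2 * C * p n k else 0 := by
    intro k hk
    have hpk := hp0 n k hk
    split_ifs with hk_far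
    · have : |f (k / n) - f x| ≤ 2 * C := by
        have h1 := hC _ (hmem k hk)
        have h2 := hC x hx
        rw [Real.norm_eq_abs] at h1 h2
        linarith [abs_sub (f (k / n)) (f x)]
      nlinarith
    · have := hfη (hmem k hk) (by rw [Real.dist_eq]; linarith)
      rw [Real.dist_eq] at this
      nlinarith
  calc dist (∑ k ∈ range (n + 1), p n k * f (k / n)) (f x)
      = |∑ k ∈ range (n + 1), p n k * (f (k / n) - f x)| := by
        simp_rw [Real.dist_eq, mul_sub, sum_sub_distrib, ← sum_mul, hp1, one_mul]
    _ ≤ ∑ k ∈ range (n + 1), p n k * |f (k / n) - f x| := by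
        refine (abs_sum_le_sum_abs _ _).trans (sum_le_sum fun k hk => ?_)
        rw [abs_mul, abs_of_nonneg (hp0 n k hk)]
    _ ≤ ∑ k ∈ range (n + 1),
          (p n k * (ε / 2) + if η / 2 < |(k : ℝ) / n - x| then 2 * C * p n k else 0) :=
        sum_le_sum hpt
    _ = ε / 2 + 2 * C * ∑ k ∈ (range (n + 1)).filter (fun k : ℕ => η / 2 < |(k : ℝ) / n - x|),
          p n k := by
        rw [sum_add_distrib, ← sum_mul, hp1, one_mul, mul_sum, sum_filter]
    _ < ε := by linarith

lemma inv_add_one_le_log_add_one_sub_log {y : ℝ} (hy : 0 < y) :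
    (y + 1)⁻¹ ≤ log (y + 1) - log y ∧ log (y + 1) - log y ≤ y⁻¹ := by
  rw [← log_div (by positivity) hy.ne']
  constructor
  · have h := one_sub_inv_le_log_of_pos (x := (y + 1) / y) (by positivity)
    rwa [inv_div, one_sub_div (by positivity), add_sub_cancel_left, one_div] at h
  · have h := log_le_sub_one_of_pos (x := (y + 1) / y) (by positivity)
    rwa [div_sub_one hy.ne', add_sub_cancel_left, one_div] at h

lemma hfun_succ_eq_sum_Ico (k n : ℕ) : hfun (k + 1) n = ∑ i ∈ Ico k n, (i : ℝ)⁻¹ := by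
  rw [hfun, ← Ico_add_one_right_eq_Icc, ← sum_Ico_add' (c := 1)]
  simp

lemma abs_hfun_succ_sub_log_le {k n : ℕ} (hk : 0 < k) (hkn : k ≤ n) :
    |hfun (k + 1) n - (log n - log k)| ≤ (k : ℝ)⁻¹ := by
  have hlog := sum_Ico_sub (fun i : ℕ => log i) hkn
  have hinv := sum_Ico_sub (fun i : ℕ => ((i : ℝ))⁻¹) hkn
  push_cast at hlog hinv
  have hterm : ∀ i ∈ Ico k n, 0 ≤ (i : ℝ)⁻¹ - (log (i + 1) - log i) ∧
      (i : ℝ)⁻¹ - (log (i + 1) - log i) ≤ (i : ℝ)⁻¹ - ((i : ℝ) + 1)⁻¹ := fun i hi => by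
    have := inv_add_one_le_log_add_one_sub_log (y := i)
      (Nat.cast_pos.2 (hk.trans_le (mem_Ico.1 hi).1))
    constructor <;> linarith
  have hdiff : hfun (k + 1) n - (log n - log k) =
      ∑ i ∈ Ico k n, ((i : ℝ)⁻¹ - (log (i + 1) - log i)) := by
    rw [hfun_succ_eq_sum_Ico, sum_sub_distrib, hlog]
  have hupper :
      ∑ i ∈ Ico k n, ((i : ℝ)⁻¹ - (log (i + 1) - log i)) ≤ (k : ℝ)⁻¹ - (n : ℝ)⁻¹ := by
    rw [← neg_sub, ← hinv, ← sum_neg_distrib]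
    exact sum_le_sum fun i hi => by linarith [(hterm i hi).2]
  rw [hdiff, abs_of_nonneg (sum_nonneg fun i hi => (hterm i hi).1)]
  linarith [inv_nonneg.2 (Nat.cast_nonneg (α := ℝ) n)]

lemma abs_sfun_succ_sub_negMulLog_le {k n : ℕ} (hkn : k < n) :
    |sfun (k + 1) n - negMulLog (k / n)| ≤ 1 / n := by
  rcases Nat.eq_zero_or_pos k with rfl | hk
  · simp [sfun]
  have hn : (0 : ℝ) < n := Nat.cast_pos.2 (hk.trans hkn)
  have hk' : (0 : ℝ) < k := Nat.cast_pos.2 hk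
  have hs : sfun (k + 1) n = k / n * hfun (k + 1) n := by
    rw [sfun, if_neg (by omega)]
    push_cast
    ring
  have hneg : negMulLog (k / n) = k / n * (log n - log k) := by
    rw [negMulLog, log_div hk'.ne' hn.ne']
    ring
  rw [hs, hneg, ← mul_sub, abs_mul, abs_of_pos (by positivity)]
  calc (k : ℝ) / n * |hfun (k + 1) n - (log n - log k)| ≤ k / n * (k : ℝ)⁻¹ :=
        mul_le_mul_of_nonneg_left (abs_hfun_succ_sub_log_le hk hkn.le) (by positivity)
    _ = 1 / n := by field_simp

section CutoffStrategy

variable (a : ℕ → ℝ) {n : ℕ}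

lemma piNK_eq {k : ℕ} (hk : k ≤ n) :
    piNK n k a = (binomTail n k).eval (a k) - (binomTail n k).eval (a (k + 1)) +
      (bernsteinPolynomial ℝ n k).eval (a (k + 1)) := by
  rcases k with _ | k
  · simp [piNK, bernsteinPolynomial]
  have hint : (n : ℝ) * ((n - 1).choose k : ℝ) *
      (∫ t in a (k + 2)..a (k + 1), t ^ k * (1 - t) ^ (n - (k + 1))) =
      ∫ t in a (k + 2)..a (k + 1), (derivative (binomTail n (k + 1))).eval t := by
    rw [binomTail.derivative_succ hk, ← intervalIntegral.integral_const_mul]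
    refine intervalIntegral.integral_congr fun t _ => ?_
    simp only [bernsteinPolynomial, eval_mul, eval_pow, eval_natCast, eval_X, eval_sub, eval_one,
      show n - 1 - k = n - (k + 1) by omega]
    ring
  rw [piNK, if_neg k.succ_ne_zero, Nat.add_sub_cancel, hint,
    intervalIntegral.integral_eq_sub_of_hasDerivAt
      (fun t _ => (binomTail n (k + 1)).hasDerivAt t)
      ((binomTail n (k + 1)).derivative.continuous.intervalIntegrable _ _)]
  simp [bernsteinPolynomial]

lemma piNK_eq_sub {k : ℕ} (hk : k ≤ n) :
    piNK n k a = (binomTail n k).eval (a k) - (binomTail n (k + 1)).eval (a (k + 1)) := by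
  rw [piNK_eq a hk, binomTail.eq_add hk]
  simp only [eval_add]
  ring

lemma sum_range_piNK {K : ℕ} (hK : K ≤ n + 1) :
    ∑ k ∈ range K, piNK n k a = 1 - (binomTail n K).eval (a K) := by
  rw [sum_congr rfl fun k hk => piNK_eq_sub a (by simp at hk; omega),
    sum_range_sub' (fun k => (binomTail n k).eval (a k))]
  simp

lemma sum_piNK_eq_one : ∑ k ∈ range (n + 1), piNK n k a = 1 := by
  simp [sum_range_piNK a le_rfl, binomTail.eq_zero_of_lt (Nat.lt_succ_self n)]

lemma sum_filter_le_piNK (K : ℕ) :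
    ∑ k ∈ (range (n + 1)).filter (K ≤ ·), piNK n k a = (binomTail n K).eval (a K) := by
  rcases le_or_gt K (n + 1) with hK | hK
  · rw [show (range (n + 1)).filter (K ≤ ·) = Ico K (n + 1) by ext; simp; omega,
      sum_Ico_eq_sub _ hK, sum_piNK_eq_one, sum_range_piNK a hK]
    ring
  · rw [show (range (n + 1)).filter (K ≤ ·) = ∅ by ext; simp; omega,
      binomTail.eq_zero_of_lt (by omega)]
    simp

lemma sum_filter_lt_piNK (K : ℕ) :
    ∑ k ∈ (range (n + 1)).filter (· < K), piNK n k a = 1 - (binomTail n K).eval (a K) := by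
  have h := sum_filter_add_sum_filter_not (range (n + 1)) (K ≤ ·) (piNK n · a)
  simp only [not_le] at h
  rw [sum_piNK_eq_one, sum_filter_le_piNK] at h
  linarith

variable {a} {x p η : ℝ}

lemma piNK_nonneg (hrange : ∀ k : ℕ, 1 ≤ k → a k ∈ Set.Icc (0:ℝ) 1)
    (hanti : ∀ j k : ℕ, 1 ≤ j → j ≤ k → a k ≤ a j) {k : ℕ} (hk : k ≤ n) :
    0 ≤ piNK n k a := by
  have hB := bernsteinPolynomial_eval_nonneg (n := n) (ν := k) (hrange (k + 1) (by omega))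
  rw [piNK_eq a hk]
  rcases Nat.eq_zero_or_pos k with rfl | hk1
  · simpa using hB
  have := monotoneOn_eval_binomTail n k (hrange (k + 1) (by omega)) (hrange k hk1)
    (hanti k (k + 1) hk1 (by omega))
  linarith

lemma sum_filter_piNK_upper_le (hrange : ∀ k : ℕ, 1 ≤ k → a k ∈ Set.Icc (0:ℝ) 1)
    (hp : p ∈ Set.Icc (0 : ℝ) 1) (hn : 0 < n) (hη : 0 < η)
    (hap : ∀ k : ℕ, n * (p + η) ≤ k → a k ≤ p) :
    ∑ k ∈ (range (n + 1)).filter (fun k : ℕ => n * (p + η) ≤ k), piNK n k a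
      ≤ 1 / (4 * n * η ^ 2) := by
  set K := ⌈n * (p + η)⌉₊
  have hK : 1 ≤ K :=
    Nat.one_le_iff_ne_zero.2 (Nat.ceil_pos.2 (mul_pos (Nat.cast_pos.2 hn) (by linarith [hp.1]))).ne'
  have hfilter : (range (n + 1)).filter (fun k : ℕ => n * (p + η) ≤ k) =
      (range (n + 1)).filter (K ≤ ·) :=
    filter_congr fun k _ => Nat.ceil_le.symm
  rw [hfilter, sum_filter_le_piNK]
  calc (binomTail n K).eval (a K)
      ≤ (binomTail n K).eval p :=
        monotoneOn_eval_binomTail n K (hrange K hK) hp (hap K (Nat.le_ceil _))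
    _ ≤ 1 / (4 * n * η ^ 2) := by
        rw [binomTail, eval_finsetSum]
        refine sum_bernsteinPolynomial_eval_le_of_far hp hn hη
          (fun j hj => mem_range.2 (mem_Ico.1 hj).2) fun j hj => ?_
        have : (n : ℝ) * (p + η) ≤ j := Nat.ceil_le.1 (mem_Ico.1 hj).1
        rw [abs_of_nonneg (by nlinarith)]
        linarith

lemma sum_filter_piNK_lower_le (hrange : ∀ k : ℕ, 1 ≤ k → a k ∈ Set.Icc (0:ℝ) 1)
    (hp : p ∈ Set.Icc (0 : ℝ) 1) (hn : 0 < n) (hη : 0 < η)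
    (hap : ∀ k : ℕ, 1 ≤ k → p ≤ a k) :
    ∑ k ∈ (range (n + 1)).filter (fun k : ℕ => (k : ℝ) < n * (p - η)), piNK n k a
      ≤ 1 / (4 * n * η ^ 2) := by
  set M := ⌈n * (p - η)⌉₊
  have hM : M ≤ n := Nat.ceil_le.2 (by nlinarith [hp.2, (Nat.cast_pos.2 hn : (0 : ℝ) < n)])
  have hfilter : (range (n + 1)).filter (fun k : ℕ => (k : ℝ) < n * (p - η)) =
      (range (n + 1)).filter (· < M) :=
    filter_congr fun k _ => Nat.lt_ceil.symm
  have hmono : (binomTail n M).eval p ≤ (binomTail n M).eval (a M) := by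
    rcases Nat.eq_zero_or_pos M with hM0 | hM0
    · simp [hM0]
    exact monotoneOn_eval_binomTail n M hp (hrange M hM0) (hap M hM0)
  have hsplit := congrArg (eval p) (binomTail.sum_range_add (n := n) (K := M) (by omega))
  rw [eval_add, eval_finsetSum, eval_one] at hsplit
  rw [hfilter, sum_filter_lt_piNK]
  calc 1 - (binomTail n M).eval (a M)
      ≤ ∑ j ∈ range M, (bernsteinPolynomial ℝ n j).eval p := by linarith
    _ ≤ 1 / (4 * n * η ^ 2) := by
        refine sum_bernsteinPolynomial_eval_le_of_far hp hn hη
          (range_subset_range.2 (by omega)) fun j hj => ?_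
        have : (j : ℝ) < n * (p - η) := Nat.lt_ceil.1 (mem_range.1 hj)
        rw [abs_of_neg (by nlinarith)]
        linarith

lemma le_of_tendsto_cutoff (hanti : ∀ j k : ℕ, 1 ≤ j → j ≤ k → a k ≤ a j)
    (hlim : Tendsto a atTop (𝓝 x)) (k : ℕ) (hk : 1 ≤ k) : x ≤ a k :=
  le_of_tendsto hlim (eventually_atTop.2 ⟨k, fun _ hj => hanti k _ hk hj⟩)

lemma mem_Icc_of_tendsto_cutoff (hrange : ∀ k : ℕ, 1 ≤ k → a k ∈ Set.Icc (0:ℝ) 1)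
    (hanti : ∀ j k : ℕ, 1 ≤ j → j ≤ k → a k ≤ a j) (hlim : Tendsto a atTop (𝓝 x)) :
    x ∈ Set.Icc (0 : ℝ) 1 :=
  ⟨ge_of_tendsto hlim (eventually_atTop.2 ⟨1, fun _ hj => (hrange _ hj).1⟩),
    (le_of_tendsto_cutoff hanti hlim 1 le_rfl).trans (hrange 1 le_rfl).2⟩

lemma tendsto_sum_filter_piNK_far (hrange : ∀ k : ℕ, 1 ≤ k → a k ∈ Set.Icc (0:ℝ) 1)
    (hanti : ∀ j k : ℕ, 1 ≤ j → j ≤ k → a k ≤ a j) (hlim : Tendsto a atTop (𝓝 x))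
    {η : ℝ} (hη : 0 < η) :
    Tendsto (fun n : ℕ =>
      ∑ k ∈ (range (n + 1)).filter (fun k : ℕ => η < |(k : ℝ) / n - x|), piNK n k a)
      atTop (𝓝 0) := by
  have hx := mem_Icc_of_tendsto_cutoff hrange hanti hlim
  set p := min (x + η / 2) 1
  have hp : p ∈ Set.Icc (0 : ℝ) 1 := ⟨le_min (by linarith [hx.1]) zero_le_one, min_le_right _ _⟩
  obtain ⟨m, hm⟩ := eventually_atTop.1
    (hlim.eventually (eventually_le_nhds (show x < x + η / 2 by linarith)))
  have hπ : ∀ n, ∀ k ∈ range (n + 1), 0 ≤ piNK n k a := fun _ _ hk =>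
    piNK_nonneg hrange hanti (mem_range_succ_iff.1 hk)
  refine squeeze_zero' (Eventually.of_forall fun n =>
    sum_nonneg fun k hk => hπ n k (filter_subset _ _ hk)) ?_
    (tendsto_const_div_atTop_nhds_zero_nat (5 / (4 * η ^ 2)))
  filter_upwards [eventually_gt_atTop 0,
    tendsto_natCast_atTop_atTop.eventually_ge_atTop (((m : ℝ) + 1) / (η / 2))] with n hn hnm
  have hn' : (0 : ℝ) < n := Nat.cast_pos.2 hn
  rw [div_le_iff₀ (half_pos hη)] at hnm
  have hap : ∀ k : ℕ, n * (p + η / 2) ≤ k → a k ≤ p := fun k hk => by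
    have hkm : (m : ℝ) + 1 ≤ k := by nlinarith [hp.1]
    have hk1 : 1 ≤ k := by exact_mod_cast (le_add_of_nonneg_left (Nat.cast_nonneg m)).trans hkm
    exact le_min (hm k (by exact_mod_cast (le_add_of_nonneg_right zero_le_one).trans hkm))
      (hrange k hk1).2
  set up := (range (n + 1)).filter (fun k : ℕ => n * (p + η / 2) ≤ k)
  set low := (range (n + 1)).filter (fun k : ℕ => (k : ℝ) < n * (x - η))
  have hsub : (range (n + 1)).filter (fun k : ℕ => η < |(k : ℝ) / n - x|) ⊆ up ∪ low := by
    intro k hk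
    simp only [mem_filter, mem_union, up, low] at hk ⊢
    rcases lt_abs.1 hk.2 with h | h
    · rw [lt_sub_iff_add_lt, lt_div_iff₀ hn'] at h
      exact Or.inl ⟨hk.1, by nlinarith [min_le_left (x + η / 2) 1]⟩
    · rw [neg_sub, lt_sub_iff_add_lt, ← lt_sub_iff_add_lt', div_lt_iff₀ hn'] at h
      exact Or.inr ⟨hk.1, by linarith⟩
  calc ∑ k ∈ (range (n + 1)).filter (fun k : ℕ => η < |(k : ℝ) / n - x|), piNK n k a
      ≤ ∑ k ∈ up ∪ low, piNK n k a :=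
        sum_le_sum_of_subset_of_nonneg hsub fun k hk _ =>
          hπ n k (union_subset (filter_subset _ _) (filter_subset _ _) hk)
    _ ≤ ∑ k ∈ up, piNK n k a + ∑ k ∈ low, piNK n k a := by
        rw [← sum_union_inter]
        exact le_add_of_nonneg_right
          (sum_nonneg fun k hk => hπ n k (filter_subset _ _ (mem_inter.1 hk).1))
    _ ≤ 1 / (4 * n * (η / 2) ^ 2) + 1 / (4 * n * η ^ 2) :=
        add_le_add (sum_filter_piNK_upper_le hrange hp hn (half_pos hη) hap)
          (sum_filter_piNK_lower_le hrange hx hn hη (le_of_tendsto_cutoff hanti hlim))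
    _ = 5 / (4 * η ^ 2) / n := by field_simp; ring

lemma abs_w_sub_sum_piNK_mul_negMulLog_le (hrange : ∀ k : ℕ, 1 ≤ k → a k ∈ Set.Icc (0:ℝ) 1)
    (hanti : ∀ j k : ℕ, 1 ≤ j → j ≤ k → a k ≤ a j) (n : ℕ) :
    |w n a - ∑ k ∈ range (n + 1), piNK n k a * negMulLog (k / n)| ≤ 1 / n := by
  have hπ : ∀ k ∈ range (n + 1), 0 ≤ piNK n k a := fun _ hk =>
    piNK_nonneg hrange hanti (mem_range_succ_iff.1 hk)
  have hlast : negMulLog ((n : ℝ) / n) = 0 := by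
    rcases Nat.eq_zero_or_pos n with rfl | hn
    · simp
    · rw [div_self (Nat.cast_pos.2 hn).ne', negMulLog_one]
  have hmass : ∑ k ∈ range n, piNK n k a ≤ 1 := by
    rw [← sum_piNK_eq_one a (n := n)]
    exact sum_le_sum_of_subset_of_nonneg (range_subset_range.2 n.le_succ) fun k hk _ => hπ k hk
  rw [sum_range_succ, hlast, mul_zero, add_zero, w, ← sum_sub_distrib]
  calc |∑ k ∈ range n, (piNK n k a * sfun (k + 1) n - piNK n k a * negMulLog (k / n))|
      ≤ ∑ k ∈ range n, piNK n k a * (1 / n) := by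
        refine (abs_sum_le_sum_abs _ _).trans (sum_le_sum fun k hk => ?_)
        have hk' := range_subset_range.2 n.le_succ hk
        rw [← mul_sub, abs_mul, abs_of_nonneg (hπ k hk')]
        exact mul_le_mul_of_nonneg_left (abs_sfun_succ_sub_negMulLog_le (mem_range.1 hk)) (hπ k hk')
    _ ≤ 1 / n := by
        rw [← sum_mul]
        exact mul_le_of_le_one_left (by positivity) hmass

end CutoffStrategy

theorem stmt13_general (a : ℕ → ℝ) (x : ℝ)
    (hrange : ∀ k : ℕ, 1 ≤ k → a k ∈ Set.Icc (0:ℝ) 1)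
    (hanti : ∀ j k : ℕ, 1 ≤ j → j ≤ k → a k ≤ a j)
    (hlim : Tendsto a atTop (nhds x)) :
    Tendsto (fun n : ℕ => w n a) atTop (nhds (-x * Real.log x)) := by
  have hE : Tendsto (fun n : ℕ => ∑ k ∈ range (n + 1), piNK n k a * negMulLog (k / n)) atTop
      (𝓝 (negMulLog x)) :=
    tendsto_sum_mul_of_concentrated
      (fun _ _ hk => piNK_nonneg hrange hanti (mem_range_succ_iff.1 hk))
      (fun _ => sum_piNK_eq_one a) continuous_negMulLog.continuousOn
      (mem_Icc_of_tendsto_cutoff hrange hanti hlim)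
      (fun _ hη => tendsto_sum_filter_piNK_far hrange hanti hlim hη)
  refine hE.congr_dist (squeeze_zero (fun _ => dist_nonneg) (fun n => ?_)
    tendsto_one_div_atTop_nhds_zero_nat)
  rw [dist_comm, Real.dist_eq]
  exact abs_w_sub_sum_piNK_mul_negMulLog_le hrange hanti n

/-- A cutoff strategy with nonincreasing cutoffs tending to `x` (and `a_1 > 0`) has
winning probability tending to `-x·log x` (with `log 0 = 0`, so the limit at `x = 0`
is `0`). In particular it is asymptotically optimal when `x = 1/e`. -/
theorem stmt13 (a : ℕ → ℝ) (x : ℝ)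
    (hrange : ∀ k : ℕ, 1 ≤ k → a k ∈ Set.Icc (0:ℝ) 1)
    (hanti : ∀ j k : ℕ, 1 ≤ j → j ≤ k → a k ≤ a j)
    (ha1 : 0 < a 1)
    (hlim : Tendsto a atTop (nhds x)) :
    Tendsto (fun n : ℕ => w n a) atTop (nhds (-x * Real.log x)) :=
  stmt13_general a x hrange hanti hlim
end

section
/- Fix 0 ≤ x ≤ a ≤ 1 and n ≥ 1, and consider the cutoff vector (a, x, x, …, x) ∈ [0,1]^n (first cutoff a, all later cutoffs x). Then w_n(a,x,…,x) - p_n(x) = ((1-x)^n - (1-a)^n)·δ_n, where δ_1 = -1, δ_2 = 0, and δ_n = h(3,n)/n for n ≥ 3. Consequently, if x < a, then w_n(a,x,…,x) ≥ p_n(x) for every n ≥ 2, with strict inequality for every n ≥ 3: the modified strategy dominates the x-strategy on {2,3,4,…} and strongly dominates it on {3,4,…}. -/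
open Finset Real intervalIntegral

/- ### Auxiliary lemmas -/

lemma icc_bot (a b : ℕ) (h : a ≤ b) (f : ℕ → ℝ) :
    ∑ l ∈ Finset.Icc a b, f l = f a + ∑ l ∈ Finset.Icc (a+1) b, f l := by
  have hs : Finset.Icc a b = insert a (Finset.Icc (a+1) b) := by
    ext j; simp only [Finset.mem_Icc, Finset.mem_insert]; omega
  rw [hs, Finset.sum_insert (by simp)]

lemma icc_shift (a b : ℕ) (f : ℕ → ℝ) :
    ∑ j ∈ Finset.Icc (a+1) (b+1), f j = ∑ l ∈ Finset.Icc a b, f (l+1) := by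
  rw [← Finset.map_add_right_Icc a b 1, Finset.sum_map]
  rfl

lemma keyG (x q : ℝ) (hxq : x + q = 1) (N : ℕ) :
    ∑ m ∈ Finset.range N, (N.choose m : ℝ) * x ^ m * q ^ (N - m) *
        (∑ l ∈ Finset.Icc (m + 1) N, 1 / (l : ℝ))
      = ∑ i ∈ Finset.Icc 1 N, q ^ i / i := by
  induction N with
  | zero => simp
  | succ N ih =>
    have hm1 : ∀ m : ℕ, ((m:ℝ)+1) ≠ 0 := fun m => by positivity
    set G : ℕ → ℝ := fun m => (N.choose m : ℝ) * x ^ m * q ^ (N - m) *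
        (∑ l ∈ Finset.Icc (m + 1) N, 1 / (l : ℝ)) with hG
    have step : ∀ m ∈ Finset.range N,
        ((N+1).choose (m+1) : ℝ) * x ^ (m+1) * q ^ (N + 1 - (m+1)) *
          (∑ l ∈ Finset.Icc (m + 1 + 1) (N+1), 1 / (l : ℝ))
        = q * G (m+1) + x * G m := by
      intro m hm
      have hmN : m + 1 ≤ N := Finset.mem_range.1 hm
      have h1 : ∑ l ∈ Finset.Icc (m + 1 + 1) (N+1), 1 / (l : ℝ)
          = ∑ l ∈ Finset.Icc (m + 2) N, 1 / (l : ℝ) + 1 / ((N:ℝ)+1) := by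
        rw [Finset.sum_Icc_succ_top (by omega)]; push_cast; ring
      have h2 : ∑ l ∈ Finset.Icc (m + 1) N, 1 / (l : ℝ)
          = 1 / ((m:ℝ)+1) + ∑ l ∈ Finset.Icc (m + 2) N, 1 / (l : ℝ) := by
        rw [icc_bot _ _ (by omega)]; push_cast; ring
      have hpascal : ((N+1).choose (m+1) : ℝ) = (N.choose m : ℝ) + (N.choose (m+1) : ℝ) := by
        rw [Nat.choose_succ_succ]; push_cast; ring
      have hmul : ((m:ℝ)+1) * ((N+1).choose (m+1) : ℝ) = ((N:ℝ)+1) * (N.choose m : ℝ) := by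
        have h' : (N + 1) * N.choose m = (N + 1).choose (m + 1) * (m + 1) :=
          Nat.add_one_mul_choose_eq N m
        have h2' : (m+1) * ((N+1).choose (m+1)) = (N+1) * N.choose m := by
          rw [mul_comm]; exact h'.symm
        exact_mod_cast h2'
      have he : N + 1 - (m+1) = N - m := by omega
      simp only [hG]
      rw [h1, h2, he]
      have hqq : q ^ (N - m) = q ^ (N - (m+1)) * q := by
        rw [← pow_succ, show N - (m+1) + 1 = N - m by omega]
      rw [hqq]
      set S := ∑ l ∈ Finset.Icc (m+2) N, 1/(l:ℝ) with hS
      have hbr : ((N+1).choose (m+1):ℝ) * (S + 1/((N:ℝ)+1))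
          = (N.choose (m+1):ℝ) * S + (N.choose m:ℝ) * (1/((m:ℝ)+1) + S) := by
        have hkey : ((N+1).choose (m+1):ℝ) * (1/((N:ℝ)+1)) = (N.choose m:ℝ) * (1/((m:ℝ)+1)) := by
          rw [mul_one_div, mul_one_div, div_eq_div_iff (by positivity) (hm1 m)]
          linear_combination hmul
        rw [mul_add, hkey, hpascal]; ring
      linear_combination (x^(m+1) * (q^(N-(m+1)) * q)) * hbr
    rw [Finset.sum_range_succ']
    rw [Finset.sum_congr rfl step]
    have hsplit : ∑ m ∈ Finset.range N, (q * G (m+1) + x * G m)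
        = q * (∑ m ∈ Finset.range N, G (m+1)) + x * (∑ m ∈ Finset.range N, G m) := by
      rw [Finset.sum_add_distrib, Finset.mul_sum, Finset.mul_sum]
    have hshift : ∑ m ∈ Finset.range N, G (m+1) = (∑ m ∈ Finset.range N, G m) - G 0 := by
      have h1 : ∑ m ∈ Finset.range (N+1), G m = ∑ m ∈ Finset.range N, G (m+1) + G 0 :=
        Finset.sum_range_succ' G N
      have h2 : ∑ m ∈ Finset.range (N+1), G m = ∑ m ∈ Finset.range N, G m + G N :=
        Finset.sum_range_succ G N
      have hGN : G N = 0 := by simp [hG]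
      rw [hGN, add_zero] at h2; linarith [h1, h2]
    have hG0 : G 0 = q ^ N * (∑ l ∈ Finset.Icc 1 N, 1 / (l : ℝ)) := by simp [hG]
    have hf0 : ((N+1).choose 0 : ℝ) * x ^ 0 * q ^ (N + 1 - 0) *
          (∑ l ∈ Finset.Icc (0 + 1) (N+1), 1 / (l : ℝ))
        = q ^ (N+1) * ((∑ l ∈ Finset.Icc 1 N, 1 / (l : ℝ)) + 1 / ((N:ℝ)+1)) := by
      rw [show (0:ℕ)+1 = 1 from rfl, Finset.sum_Icc_succ_top (by omega), Nat.choose_zero_right]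
      push_cast; ring
    have hrhs : ∑ i ∈ Finset.Icc 1 (N+1), q ^ i / i
        = (∑ i ∈ Finset.Icc 1 N, q ^ i / i) + q^(N+1) / ((N:ℝ)+1) := by
      rw [Finset.sum_Icc_succ_top (by omega)]; push_cast; ring
    rw [hsplit, hshift, ih, hG0, hf0, hrhs]
    linear_combination (∑ i ∈ Finset.Icc 1 N, q ^ i / i) * hxq

lemma pwin_aux (x q : ℝ) (hxq : x + q = 1) (n : ℕ) :
    q^(n+1)/((n:ℝ)+1) + x * ∑ i ∈ Finset.Icc 1 n, q^i/(i:ℝ)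
      = q - ∑ k ∈ Finset.Icc 2 (n+1), q^k/((k:ℝ)*((k:ℝ)-1)) := by
  induction n with
  | zero => simp
  | succ n ih =>
    rw [Finset.sum_Icc_succ_top (by omega : 1 ≤ n+1),
        Finset.sum_Icc_succ_top (by omega : 2 ≤ n+1+1)]
    have h1 : ((n:ℝ)+1) ≠ 0 := by positivity
    have h2 : ((n:ℝ)+2) ≠ 0 := by positivity
    have hfrac : 1/(((n:ℝ)+2)*((n:ℝ)+1)) = 1/((n:ℝ)+1) - 1/((n:ℝ)+2) := by
      field_simp; ring
    push_cast
    linear_combination ih + (q^(n+1)/((n:ℝ)+1)) * hxq + q^(n+2) * hfrac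

lemma wconst (x : ℝ) (n : ℕ) (hn : 1 ≤ n) : w n (fun _ => x) = pwin n x := by
  obtain ⟨N, rfl⟩ : ∃ N, n = N + 1 := ⟨n - 1, by omega⟩
  set q : ℝ := 1 - x with hq
  have hxq : x + q = 1 := by rw [hq]; ring
  have step : ∀ m ∈ Finset.range N,
      piNK (N+1) (m+1) (fun _ => x) * sfun (m+1+1) (N+1)
        = x * ((N.choose m : ℝ) * x ^ m * q ^ (N - m) *
            (∑ l ∈ Finset.Icc (m + 1) N, 1 / (l : ℝ))) := by
    intro m hm
    have hN1 : ((N:ℝ)+1) ≠ 0 := by positivity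
    have hdiv : ((m:ℝ)+1)/((N:ℝ)+1) * (((N+1).choose (m+1)):ℝ) = ((N.choose m):ℝ) := by
      rw [div_mul_eq_mul_div, div_eq_iff hN1]
      have h' : (N + 1) * N.choose m = (N + 1).choose (m + 1) * (m + 1) :=
        Nat.add_one_mul_choose_eq N m
      have h2' : (m+1) * ((N+1).choose (m+1)) = (N+1) * N.choose m := by
        rw [mul_comm]; exact h'.symm
      have hc : ((m:ℝ)+1) * (((N+1).choose (m+1)):ℝ) = ((N:ℝ)+1) * ((N.choose m):ℝ) := by
        exact_mod_cast h2'
      linear_combination hc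
    have hicc : hfun (m+1+1) (N+1) = ∑ l ∈ Finset.Icc (m + 1) N, 1 / (l : ℝ) := by
      rw [hfun, icc_shift (m+1) N (fun j => 1 / ((j:ℝ) - 1))]
      apply Finset.sum_congr rfl
      intro l hl
      push_cast
      ring_nf
    rw [piNK, sfun]
    simp only [Nat.add_sub_cancel, if_neg (by omega : ¬ m + 1 = 0),
      if_neg (by omega : ¬ m + 1 + 1 = 1), intervalIntegral.integral_same, mul_zero, zero_add]
    rw [hicc, show N + 1 - (m+1) = N - m by omega]
    push_cast
    linear_combination (x^(m+1) * q^(N-m) * (∑ l ∈ Finset.Icc (m + 1) N, 1 / (l : ℝ)))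
      * hdiv
  rw [w, Finset.sum_range_succ', Finset.sum_congr rfl step, ← Finset.mul_sum,
    keyG x q hxq N]
  have h0 : piNK (N+1) 0 (fun _ => x) * sfun (0+1) (N+1) = q^(N+1) / ((N:ℝ)+1) := by
    rw [piNK, sfun]
    simp only [if_pos rfl]
    push_cast; ring
  rw [h0, pwin]
  have := pwin_aux x q hxq N
  linarith [this]

lemma intlem (x a : ℝ) (n : ℕ) (hn : 1 ≤ n) :
    ∫ t in x..a, (1 - t) ^ (n - 1) = ((1-x)^n - (1-a)^n) / n := by
  rw [show (fun t : ℝ => (1 - t) ^ (n-1)) = (fun t : ℝ => ((fun s : ℝ => s ^ (n-1)) (1 - t))) from rfl]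
  rw [intervalIntegral.integral_comp_sub_left (fun s : ℝ => s ^ (n-1)) 1]
  rw [integral_pow]
  rw [show n - 1 + 1 = n by omega]
  have : ((n - 1 : ℕ) : ℝ) + 1 = (n : ℝ) := by
    have := Nat.cast_sub hn (R := ℝ); push_cast at this ⊢; linarith
  rw [this]

lemma wdiff (x a : ℝ) (n : ℕ) (hn : 1 ≤ n) :
    w n (fun i : ℕ => if i = 1 then a else x) - w n (fun _ => x)
      = ((1 - x) ^ n - (1 - a) ^ n) * (sfun 2 n - sfun 1 n) := by
  set b : ℕ → ℝ := fun i : ℕ => if i = 1 then a else x with hb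
  set F : ℕ → ℝ := fun k => piNK n k b * sfun (k+1) n - piNK n k (fun _ => x) * sfun (k+1) n
    with hF
  have hws : w n b - w n (fun _ => x) = ∑ k ∈ Finset.range n, F k := by
    rw [w, w, ← Finset.sum_sub_distrib]
  rcases eq_or_lt_of_le hn with h1 | h2
  · have : n = 1 := h1.symm
    subst this
    simp only [w, Finset.sum_range_one, piNK, sfun, hfun, hb]
    norm_num
  · have hn2 : 2 ≤ n := h2
    have hzero : ∀ k ∈ Finset.range n, k ∉ Finset.range 2 → F k = 0 := by
      intro k hk hk2
      have hk0 : ¬ (k = 0) := by simp at hk2; omega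
      have hkk : ¬ (k = 1) := by simp at hk2; omega
      have hks : ¬ (k + 1 = 1) := by omega
      simp only [hF, piNK, if_neg hk0, hb, if_neg hks, if_neg hkk, sub_self]
    rw [hws, ← Finset.sum_subset (Finset.range_subset_range.2 hn2) hzero]
    rw [Finset.sum_range_succ, Finset.sum_range_one]
    have hn0 : (n : ℝ) ≠ 0 := by positivity
    have hF0 : F 0 = ((1-a)^n - (1-x)^n) * sfun 1 n := by
      simp only [hF, piNK, if_pos rfl, hb]
      norm_num
      ring
    have hF1 : F 1 = ((1-x)^n - (1-a)^n) * sfun 2 n := by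
      simp only [hF, piNK, if_neg (one_ne_zero), hb]
      norm_num
      rw [intlem x a n hn]
      field_simp
      ring
    rw [hF0, hF1]
    ring

lemma sdelta (n : ℕ) (hn : 1 ≤ n) :
    sfun 2 n - sfun 1 n = (if n = 1 then (-1:ℝ) else if n = 2 then 0 else hfun 3 n / n) := by
  match n, hn with
  | 1, _ => norm_num [sfun, hfun]
  | 2, _ =>
    norm_num [sfun, hfun]
  | (m+3), _ =>
    have h3 : ¬ (m + 3 = 1) := by omega
    have h4 : ¬ (m + 3 = 2) := by omega
    rw [if_neg h3, if_neg h4]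
    have hh : hfun 2 (m+3) = 1 + hfun 3 (m+3) := by
      rw [hfun, icc_bot 2 (m+3) (by omega), ← hfun]
      norm_num
    simp only [sfun, if_neg (by omega : ¬ (2:ℕ) = 1), if_pos rfl, hh]
    push_cast
    ring

lemma hfun3_pos (n : ℕ) (hn : 3 ≤ n) : 0 < hfun 3 n := by
  rw [hfun]
  apply Finset.sum_pos
  · intro j hj
    have := (Finset.mem_Icc.1 hj).1
    have h3 : (3:ℝ) ≤ (j:ℝ) := by exact_mod_cast this
    have : (0:ℝ) < (j:ℝ) - 1 := by linarith
    positivity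
  · exact ⟨3, Finset.mem_Icc.2 ⟨le_refl 3, hn⟩⟩

/-- Comparing the strategy with cutoffs `(a, x, x, …)` to the `x`-strategy. -/
theorem stmt14 (x a : ℝ) (hx : 0 ≤ x) (hxa : x ≤ a) (ha : a ≤ 1) :
    (∀ n : ℕ, 1 ≤ n →
      w n (fun i : ℕ => if i = 1 then a else x) - pwin n x
        = ((1 - x) ^ n - (1 - a) ^ n) *
          (if n = 1 then -1 else if n = 2 then 0 else hfun 3 n / (n : ℝ))) ∧
    (x < a →
      (∀ n : ℕ, 2 ≤ n → pwin n x ≤ w n (fun i : ℕ => if i = 1 then a else x)) ∧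
      (∀ n : ℕ, 3 ≤ n → pwin n x < w n (fun i : ℕ => if i = 1 then a else x))) := by
  have hmain : ∀ n : ℕ, 1 ≤ n →
      w n (fun i : ℕ => if i = 1 then a else x) - pwin n x
        = ((1 - x) ^ n - (1 - a) ^ n) *
          (if n = 1 then -1 else if n = 2 then 0 else hfun 3 n / (n : ℝ)) := by
    intro n hn
    rw [← wconst x n hn, wdiff x a n hn, sdelta n hn]
  refine ⟨hmain, fun hlt => ⟨?_, ?_⟩⟩
  · intro n hn2
    have h := hmain n (by omega)
    have h1 : (1-a)^n ≤ (1-x)^n := by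
      apply pow_le_pow_left₀ (by linarith) (by linarith)
    have h2 : (0:ℝ) ≤ (if n = 1 then (-1:ℝ) else if n = 2 then 0 else hfun 3 n / (n:ℝ)) := by
      rw [if_neg (by omega : ¬ n = 1)]
      rcases eq_or_lt_of_le hn2 with h | h
      · rw [if_pos h.symm]
      · rw [if_neg (by omega : ¬ n = 2)]
        have := hfun3_pos n (by omega)
        positivity
    nlinarith [mul_nonneg (sub_nonneg.2 h1) h2]
  · intro n hn3
    have h := hmain n (by omega)
    have h1 : (1-a)^n < (1-x)^n := by
      apply pow_lt_pow_left₀ (by linarith) (by linarith) (by omega)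
    have h2 : (0:ℝ) < (if n = 1 then (-1:ℝ) else if n = 2 then 0 else hfun 3 n / (n:ℝ)) := by
      rw [if_neg (by omega : ¬ n = 1), if_neg (by omega : ¬ n = 2)]
      have := hfun3_pos n hn3
      have hnp : (0:ℝ) < n := by positivity
      positivity
    nlinarith [mul_pos (sub_pos.2 h1) h2]
end

section
/- Let c = 2 - √3, let x ∈ (c, 1), and let y satisfy max((x-c)/(1-c), 0) < y ≤ x. Then z := (x-y)/(1-y) satisfies 0 ≤ z < c, and for every n ≥ 3 one has p_n(z) < p_n(c); hence the quantity (1-y)^n·(p_n(c) - p_n(z)), which is the advantage over the x-strategy of the strategy that switches to cutoff time c·(1-y) + y when no item has arrived by time y, is strictly positive for every n ≥ 3. -/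
open Finset Real

lemma key17 (n : ℕ) (hn : 3 ≤ n) (z : ℝ) (hz0 : 0 ≤ z) (hzc : z < 2 - Real.sqrt 3) :
    pwin n z < pwin n (2 - Real.sqrt 3) := by
  have hsq : Real.sqrt 3 ^ 2 = 3 := Real.sq_sqrt (by norm_num)
  have h31 : 1 < Real.sqrt 3 := by nlinarith [Real.sqrt_nonneg 3]
  set u : ℝ := 1 - z with hu
  set v : ℝ := Real.sqrt 3 - 1 with hv
  have hv0 : 0 < v := by simp [hv]; linarith
  have huv : v < u := by simp [hu, hv]; linarith
  have hu1 : u ≤ 1 := by simp [hu]; linarith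
  have hveq : 1 - (2 - Real.sqrt 3) = v := by rw [hv]; ring
  rw [← sub_pos]
  have hrw : pwin n (2 - Real.sqrt 3) - pwin n z
      = (v - u) + ∑ k ∈ Finset.Icc 2 n, (u ^ k - v ^ k) / ((k : ℝ) * ((k : ℝ) - 1)) := by
    unfold pwin
    rw [hveq, ← hu]
    rw [Finset.sum_congr rfl (fun k _ => sub_div (u ^ k) (v ^ k) _),
      Finset.sum_sub_distrib]
    ring
  rw [hrw]
  have hnonneg : ∀ k ∈ Finset.Icc 2 n, 0 ≤ (u ^ k - v ^ k) / ((k : ℝ) * ((k : ℝ) - 1)) := by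
    intro k hk
    have hk2 : 2 ≤ k := (Finset.mem_Icc.mp hk).1
    have hk2' : (2 : ℝ) ≤ (k : ℝ) := by exact_mod_cast hk2
    apply div_nonneg
    · have := pow_le_pow_left₀ hv0.le huv.le k
      linarith
    · nlinarith
  have hsub : Finset.Icc (2:ℕ) 3 ⊆ Finset.Icc 2 n := Finset.Icc_subset_Icc_right hn
  have hS : ∑ k ∈ Finset.Icc (2:ℕ) 3, (u ^ k - v ^ k) / ((k : ℝ) * ((k : ℝ) - 1))
      ≤ ∑ k ∈ Finset.Icc 2 n, (u ^ k - v ^ k) / ((k : ℝ) * ((k : ℝ) - 1)) :=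
    Finset.sum_le_sum_of_subset_of_nonneg hsub (fun k hk _ => hnonneg k hk)
  have h23 : ∑ k ∈ Finset.Icc (2:ℕ) 3, (u ^ k - v ^ k) / ((k : ℝ) * ((k : ℝ) - 1))
      = (u ^ 2 - v ^ 2) / 2 + (u ^ 3 - v ^ 3) / 6 := by
    have he : Finset.Icc (2:ℕ) 3 = {2, 3} := by decide
    rw [he, Finset.sum_insert (by decide), Finset.sum_singleton]
    norm_num
  have hzero : v ^ 2 = 2 - 2 * v := by rw [hv]; nlinarith [hsq]
  have hfin : 0 < (v - u) + ((u ^ 2 - v ^ 2) / 2 + (u ^ 3 - v ^ 3) / 6) := by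
    have hid : (v - u) + ((u ^ 2 - v ^ 2) / 2 + (u ^ 3 - v ^ 3) / 6)
        = (u - v) ^ 2 / 2 + v * (u - v) ^ 2 / 2 + (u - v) ^ 3 / 6
          + (u - v) * (v ^ 2 - (2 - 2 * v)) / 2 := by ring
    have ht : 0 < u - v := sub_pos.mpr huv
    rw [hid, hzero]
    have h1 := mul_pos ht ht
    have h2 := mul_pos (mul_pos ht ht) ht
    have h3 := mul_pos hv0 (mul_pos ht ht)
    nlinarith
  linarith [hS, h23.symm.le.trans hS]

/-- With `c = 2 - √3`, `x ∈ (c,1)` and `max((x-c)/(1-c),0) < y ≤ x`, the quantity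
`z = (x-y)/(1-y)` lies in `[0,c)` and the advantage `(1-y)^n (p_n(c) - p_n(z))` of the
modified strategy over the `x`-strategy is strictly positive for all `n ≥ 3`. -/
theorem stmt17 (x y : ℝ) (hx : x ∈ Set.Ioo (2 - Real.sqrt 3) 1)
    (hy1 : max ((x - (2 - Real.sqrt 3)) / (1 - (2 - Real.sqrt 3))) 0 < y) (hy2 : y ≤ x) :
    0 ≤ (x - y) / (1 - y) ∧ (x - y) / (1 - y) < 2 - Real.sqrt 3 ∧
    (∀ n : ℕ, 3 ≤ n → pwin n ((x - y) / (1 - y)) < pwin n (2 - Real.sqrt 3)) ∧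
    (∀ n : ℕ, 3 ≤ n →
      0 < (1 - y) ^ n * (pwin n (2 - Real.sqrt 3) - pwin n ((x - y) / (1 - y)))) := by
  have hsq : Real.sqrt 3 ^ 2 = 3 := Real.sq_sqrt (by norm_num)
  have h31 : 1 < Real.sqrt 3 := by nlinarith [Real.sqrt_nonneg 3]
  have h32 : Real.sqrt 3 < 2 := by nlinarith [Real.sqrt_nonneg 3]
  obtain ⟨hxc, hx1⟩ := hx
  have hy0 : 0 < y := lt_of_le_of_lt (le_max_right _ _) hy1
  have hyc : (x - (2 - Real.sqrt 3)) / (1 - (2 - Real.sqrt 3)) < y :=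
    lt_of_le_of_lt (le_max_left _ _) hy1
  have h1c : (0:ℝ) < 1 - (2 - Real.sqrt 3) := by linarith
  have h1y : (0:ℝ) < 1 - y := by linarith
  have hz0 : 0 ≤ (x - y) / (1 - y) := div_nonneg (by linarith) h1y.le
  have hzc : (x - y) / (1 - y) < 2 - Real.sqrt 3 := by
    rw [div_lt_iff₀ h1y]
    have := (div_lt_iff₀ h1c).mp hyc
    nlinarith
  exact ⟨hz0, hzc, fun n hn => key17 n hn _ hz0 hzc, fun n hn =>
    mul_pos (pow_pos h1y n) (sub_pos.mpr (key17 n hn _ hz0 hzc))⟩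
end

section
/- Let a_1 = 1 - 1/e, a_2 = (1 - 2/e)^{1/2}, and a_3 = ((2(1 - 2/e)^{3/2} - e^{-3})/2)^{1/3}. Then 1 > a_1 > a_2 > a_3 > 1/e, and the cutoff strategy with these cutoffs satisfies w_1(a_1) = 1/e, w_2(a_1,a_2) = 1/e, and w_3(a_1,a_2,a_3) = 1/e; that is, its winning probability equals exactly 1/e for n = 1, 2, 3 items. -/
open Finset Real intervalIntegral

/-! The integrals in `π_{n,k}` are polynomial, so for every cutoff sequence
`w₁ = 1 - a₁`, `w₂ = (1 - a₂²)/2` and `w₃ = (3 - (1 - a₁)³ - 3a₂² + 2a₂³ - 2a₃³)/6`; the given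
cutoffs are exactly the solutions of `w₁ = w₂ = w₃ = u` with `u = 1/e`. Comparing cubes, the
ordering `a₂ > a₃ > u` amounts to `3u³ < 2a₂³`, which holds because `a₂ > 1/2` once `u < 3/8`. -/

theorem integral_mul_one_sub (a b : ℝ) :
    ∫ t in a..b, t * (1 - t) = (b ^ 2 - a ^ 2) / 2 - (b ^ 3 - a ^ 3) / 3 := by
  simp only [mul_one_sub, ← sq]
  rw [integral_sub intervalIntegrable_id (intervalIntegrable_pow 2), integral_id, integral_pow]
  ring

theorem w_one (a : ℕ → ℝ) : w 1 a = 1 - a 1 := by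
  simp [w, piNK, sfun]

theorem w_two (a : ℕ → ℝ) : w 2 a = (1 - a 2 ^ 2) / 2 := by
  simp only [w, piNK, Nat.cast_ofNat, Nat.add_one_sub_one, sfun, Nat.add_eq_right, one_div,
    Nat.cast_add, Nat.cast_one, add_sub_cancel_right, hfun, mul_ite, ite_mul, sum_range_succ,
    range_one, sum_singleton, ↓reduceIte, one_ne_zero, tsub_self, Nat.choose_succ_self_right,
    zero_add, mul_one, pow_zero, pow_one, one_mul, Nat.reduceAdd,
    integral_comp_sub_left (fun t => t), integral_id, Icc_self]
  ring

theorem w_three (a : ℕ → ℝ) :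
    w 3 a = (3 - (1 - a 1) ^ 3 - 3 * a 2 ^ 2 + 2 * a 2 ^ 3 - 2 * a 3 ^ 3) / 6 := by
  simp only [w, piNK, Nat.cast_ofNat, Nat.add_one_sub_one, sfun, Nat.add_eq_right, one_div,
    Nat.cast_add, Nat.cast_one, add_sub_cancel_right, hfun, mul_ite, ite_mul, sum_range_succ,
    range_one, sum_singleton, ↓reduceIte, one_ne_zero, tsub_self, Nat.choose_zero_right, mul_one,
    pow_zero, one_mul, Nat.reduceAdd, integral_comp_sub_left (fun t => t ^ 2), integral_pow,
    Nat.choose_one_right, pow_one, Nat.reduceLeDiff, sum_Icc_succ_top, Icc_self,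
    OfNat.ofNat_ne_zero, Nat.choose_succ_self_right, Nat.reduceSub, integral_mul_one_sub]
  ring

theorem three_mul_pow_three_lt_two_mul_sqrt_pow_three {u : ℝ} (hu₀ : 0 ≤ u) (hu : u < 3 / 8) :
    3 * u ^ 3 < 2 * √(1 - 2 * u) ^ 3 := by
  have h_half : 1 / 2 < √(1 - 2 * u) := (lt_sqrt (by norm_num)).2 (by linarith)
  have h_sqrt : (1 / 2 : ℝ) ^ 3 < √(1 - 2 * u) ^ 3 :=
    pow_lt_pow_left₀ h_half (by norm_num) three_ne_zero
  have h_u : u ^ 3 < (3 / 8 : ℝ) ^ 3 := pow_lt_pow_left₀ hu hu₀ three_ne_zero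
  linarith

theorem sqrt_pow_three {x : ℝ} (hx : 0 ≤ x) : √x ^ 3 = x ^ ((3 : ℝ) / 2) := by
  rw [sqrt_eq_rpow, ← rpow_natCast, ← rpow_mul hx]
  norm_num

theorem rpow_one_div_three_pow_three {x : ℝ} (hx : 0 ≤ x) : (x ^ ((1 : ℝ) / 3)) ^ 3 = x := by
  rw [one_div]
  exact_mod_cast rpow_inv_natCast_pow hx three_ne_zero

theorem cutoff_chain {u a₂ a₃ : ℝ} (hu : 0 < u) (ha₂ : 0 ≤ a₂) (ha₂_sq : a₂ ^ 2 = 1 - 2 * u)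
    (ha₃ : 0 ≤ a₃) (ha₃_cube : 2 * a₃ ^ 3 = 2 * a₂ ^ 3 - u ^ 3)
    (h_key : 3 * u ^ 3 < 2 * a₂ ^ 3) :
    1 > 1 - u ∧ 1 - u > a₂ ∧ a₂ > a₃ ∧ a₃ > u := by
  refine ⟨by linarith, ?_, ?_, ?_⟩
  · exact lt_of_pow_lt_pow_left₀ 2 (by nlinarith) (by nlinarith)
  · exact lt_of_pow_lt_pow_left₀ 3 ha₂ (by linarith [pow_pos hu 3])
  · exact lt_of_pow_lt_pow_left₀ 3 ha₃ (by linarith)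

/-- The cutoffs `a_1 = 1 - 1/e`, `a_2 = (1-2/e)^{1/2}`,
`a_3 = ((2(1-2/e)^{3/2} - e^{-3})/2)^{1/3}` are strictly decreasing, stay above `1/e`,
and give winning probability exactly `1/e` for `n = 1, 2, 3`. -/
theorem stmt18 :
    (1 : ℝ) > 1 - (Real.exp 1)⁻¹ ∧
    1 - (Real.exp 1)⁻¹ > Real.sqrt (1 - 2 / Real.exp 1) ∧
    Real.sqrt (1 - 2 / Real.exp 1)
      > ((2 * (1 - 2 / Real.exp 1) ^ ((3:ℝ)/2) - Real.exp (-3)) / 2) ^ ((1:ℝ)/3) ∧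
    ((2 * (1 - 2 / Real.exp 1) ^ ((3:ℝ)/2) - Real.exp (-3)) / 2) ^ ((1:ℝ)/3)
      > (Real.exp 1)⁻¹ ∧
    (∀ cut : ℕ → ℝ,
      cut 1 = 1 - (Real.exp 1)⁻¹ →
      cut 2 = Real.sqrt (1 - 2 / Real.exp 1) →
      cut 3 = ((2 * (1 - 2 / Real.exp 1) ^ ((3:ℝ)/2) - Real.exp (-3)) / 2) ^ ((1:ℝ)/3) →
      w 1 cut = (Real.exp 1)⁻¹ ∧ w 2 cut = (Real.exp 1)⁻¹ ∧ w 3 cut = (Real.exp 1)⁻¹) := by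
  have hu : 0 < (exp 1)⁻¹ := inv_pos.2 (exp_pos 1)
  have hu' : (exp 1)⁻¹ < 3 / 8 := by
    rw [inv_lt_comm₀ (exp_pos 1) (by norm_num)]
    linarith [exp_one_gt_d9]
  have h_exp : exp (-3) = (exp 1)⁻¹ ^ 3 := by
    rw [exp_neg, inv_pow, exp_one_pow, Nat.cast_ofNat]
  rw [div_eq_mul_inv 2, h_exp, ← sqrt_pow_three (by linarith)]
  have h_key := three_mul_pow_three_lt_two_mul_sqrt_pow_three hu.le hu'
  have ha₂_sq : √(1 - 2 * (exp 1)⁻¹) ^ 2 = 1 - 2 * (exp 1)⁻¹ := sq_sqrt (by linarith)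
  set u := (exp 1)⁻¹
  set a₂ := √(1 - 2 * u)
  have h_radicand : 0 ≤ (2 * a₂ ^ 3 - u ^ 3) / 2 := by linarith [pow_pos hu 3]
  have ha₃_cube := rpow_one_div_three_pow_three h_radicand
  obtain ⟨h₁, h₂, h₃, h₄⟩ := cutoff_chain hu (sqrt_nonneg _) ha₂_sq
    (rpow_nonneg h_radicand _) (by rw [ha₃_cube]; ring) h_key
  refine ⟨h₁, h₂, h₃, h₄, fun cut hcut₁ hcut₂ hcut₃ => ⟨?_, ?_, ?_⟩⟩
  · rw [w_one, hcut₁]; ring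
  · rw [w_two, hcut₂, ha₂_sq]; ring
  · rw [w_three, hcut₁, hcut₂, hcut₃, ha₃_cube]; linear_combination (-1 / 2 : ℝ) * ha₂_sq
end

section
/- Define w(b,p) = (1-p)·b + (p/24)·(11 - 5b^4) for (b,p) ∈ [0,1]^2. Then: (a) there is a unique b* ∈ (0,1) with 24b* + 5(b*)^4 = 11, and setting p* = 6/(6 + 5(b*)^3), the pair (b*, p*) is a saddle point, i.e. w(b, p*) ≤ w(b*, p*) = b* = w(b*, p) for all b, p ∈ [0,1]; (b) max_{b∈[0,1]} w(b,1) = 11/24 > b* = max_{b∈[0,1]} w(b, p*). Consequently the optimal winning probability p ↦ max_{b∈[0,1]} w(b,p) is not nonincreasing in p, even though the two-point distribution ν_1 = 1-p, ν_4 = p is stochastically increasing in p. -/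
open Finset Real

/-- `w(b,p) = (1-p)·b + (p/24)·(11 - 5b⁴)`, the winning probability in the best-choice
game where the number of items is `1` with probability `1-p` and `4` with probability
`p`, and Alice accepts the first item iff it arrives after `1 - b`. -/
noncomputable def wgame (b p : ℝ) : ℝ := (1 - p) * b + p / 24 * (11 - 5 * b ^ 4)

theorem stmt19 :
    ∃ bstar ∈ Set.Ioo (0:ℝ) 1,
      24 * bstar + 5 * bstar ^ 4 = 11 ∧
      (∀ b ∈ Set.Ioo (0:ℝ) 1, 24 * b + 5 * b ^ 4 = 11 → b = bstar) ∧
      (∀ b ∈ Set.Icc (0:ℝ) 1, wgame b (6 / (6 + 5 * bstar ^ 3)) ≤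
        wgame bstar (6 / (6 + 5 * bstar ^ 3))) ∧
      wgame bstar (6 / (6 + 5 * bstar ^ 3)) = bstar ∧
      (∀ p ∈ Set.Icc (0:ℝ) 1, wgame bstar p = bstar) ∧
      (∀ b ∈ Set.Icc (0:ℝ) 1, wgame b 1 ≤ 11 / 24) ∧
      (∃ b ∈ Set.Icc (0:ℝ) 1, wgame b 1 = 11 / 24) ∧
      bstar < 11 / 24 ∧
      ¬ (∀ p q : ℝ, p ∈ Set.Icc (0:ℝ) 1 → q ∈ Set.Icc (0:ℝ) 1 → p ≤ q →
          (⨆ b : Set.Icc (0:ℝ) 1, wgame b q) ≤ ⨆ b : Set.Icc (0:ℝ) 1, wgame b p) := by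
  -- existence of bstar via IVT
  have hcont : ContinuousOn (fun x : ℝ => 24 * x + 5 * x ^ 4) (Set.Icc 0 1) := by
    fun_prop
  have hIVT := intermediate_value_Ioo (by norm_num : (0:ℝ) ≤ 1) hcont
  have h11 : (11:ℝ) ∈ Set.Ioo (24 * (0:ℝ) + 5 * (0:ℝ) ^ 4) (24 * (1:ℝ) + 5 * (1:ℝ) ^ 4) := by
    norm_num
  obtain ⟨c, hc, hceq⟩ := hIVT h11
  have hc0 : 0 < c := hc.1
  have hc1 : c < 1 := hc.2
  have hceq' : 24 * c + 5 * c ^ 4 = 11 := hceq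
  have hD : (0:ℝ) < 6 + 5 * c ^ 3 := by positivity
  -- value lemma: wgame c p = c for all p
  have hval : ∀ p : ℝ, wgame c p = c := by
    intro p
    have h : 11 - 5 * c ^ 4 = 24 * c := by linarith
    rw [wgame, h]; ring
  -- saddle inequality
  have hsaddle : ∀ b ∈ Set.Icc (0:ℝ) 1, wgame b (6 / (6 + 5 * c ^ 3)) ≤ c := by
    intro b hb
    have hrepr : wgame b (6 / (6 + 5 * c ^ 3))
        = (5 * c ^ 3 * b + (11 - 5 * b ^ 4) / 4) / (6 + 5 * c ^ 3) := by
      rw [wgame]; field_simp; ring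
    rw [hrepr, div_le_iff₀ hD]
    have hpos : (0:ℝ) ≤ b ^ 2 + 2 * b * c + 3 * c ^ 2 := by
      nlinarith [sq_nonneg (b + c), sq_nonneg c]
    nlinarith [mul_nonneg (sq_nonneg (b - c)) hpos]
  have hlt : c < 11 / 24 := by nlinarith [pow_pos hc0 4]
  refine ⟨c, hc, hceq', ?_, ?_, hval _, fun p _ => hval p, ?_, ⟨0, by norm_num, by
    rw [wgame]; norm_num⟩, hlt, ?_⟩
  · -- uniqueness
    intro b hb hbeq
    have hfac : (b - c) * (24 + 5 * (b ^ 3 + b ^ 2 * c + b * c ^ 2 + c ^ 3)) = 0 := by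
      nlinarith [hbeq, hceq']
    have hpos : (0:ℝ) < 24 + 5 * (b ^ 3 + b ^ 2 * c + b * c ^ 2 + c ^ 3) := by
      nlinarith [hb.1, hc0, pow_pos hb.1 3, pow_pos hc0 3,
        mul_pos (mul_pos hb.1 hb.1) hc0, mul_pos hb.1 (mul_pos hc0 hc0)]
    have := mul_eq_zero.mp hfac
    rcases this with h | h
    · linarith
    · linarith
  · intro b hb
    calc wgame b (6 / (6 + 5 * c ^ 3)) ≤ c := hsaddle b hb
    _ = wgame c (6 / (6 + 5 * c ^ 3)) := (hval _).symm
  · intro b hb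
    rw [wgame]
    nlinarith [pow_nonneg hb.1 4]
  · -- non-monotonicity
    intro h
    set p : ℝ := 6 / (6 + 5 * c ^ 3) with hp
    have hpmem : p ∈ Set.Icc (0:ℝ) 1 := by
      constructor
      · positivity
      · rw [hp, div_le_one hD]; nlinarith [pow_pos hc0 3]
    have h1mem : (1:ℝ) ∈ Set.Icc (0:ℝ) 1 := by norm_num
    have hple : p ≤ 1 := hpmem.2
    have hkey := h p 1 hpmem h1mem hple
    have hbdd : BddAbove (Set.range fun b : Set.Icc (0:ℝ) 1 => wgame b 1) := by
      refine ⟨11 / 24, ?_⟩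
      rintro x ⟨b, rfl⟩
      simp only [wgame]
      nlinarith [pow_nonneg b.2.1 4]
    have hle1 : (11:ℝ) / 24 ≤ ⨆ b : Set.Icc (0:ℝ) 1, wgame b 1 := by
      have h0 : wgame (0:ℝ) 1 ≤ ⨆ b : Set.Icc (0:ℝ) 1, wgame b 1 :=
        le_ciSup hbdd (⟨0, by norm_num⟩ : Set.Icc (0:ℝ) 1)
      have h0' : wgame (0:ℝ) 1 = 11 / 24 := by rw [wgame]; norm_num
      linarith
    have hle2 : (⨆ b : Set.Icc (0:ℝ) 1, wgame b p) ≤ c :=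
      ciSup_le fun b => hsaddle b b.2
    linarith
end
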